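/- arXiv:0807.0484 — 5 statements merged into one kernel-verified Lean document; each statement's English description precedes it below -/
import Mathlib

section
/- Let s ≥ 3 be an integer and let φ : ℕ → ℝ be a nondecreasing nonnegative function such that λ_{s−2}(n) ≤ n·φ(n) for all n ≥ 1. Then for every integer n ≥ 1, λ_s(n) ≤ φ(n)·(ψ_s(2n, n) + 2n). -/
/-- The alternating list `a b a b ...` of length `l`. -/
def altList (a b : ℕ) : ℕ → List ℕ
  | 0 => []
  | l + 1 => a :: altList b a l

/-- `S` contains an alternation of length `l`: two distinct symbols occur as an
alternating (not necessarily contiguous) subsequence of length `l`. -/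
def HasAlt (S : List ℕ) (l : ℕ) : Prop :=
  ∃ a b : ℕ, a ≠ b ∧ (altList a b l).Sublist S

/-- A Davenport–Schinzel sequence of order `s`: no two adjacent equal entries and
no alternation of length `s + 2`. -/
def IsDS (s : ℕ) (S : List ℕ) : Prop :=
  List.Chain' (· ≠ ·) S ∧ ¬ HasAlt S (s + 2)

/-- `S` can be partitioned into at most `m` contiguous blocks, each consisting of
pairwise distinct symbols. -/
def HasBlocks (S : List ℕ) (m : ℕ) : Prop :=
  ∃ Bs : List (List ℕ), Bs.length ≤ m ∧ S = Bs.flatten ∧ ∀ B ∈ Bs, B.Nodup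

/-- `λ_s(n)`: maximum length of a Davenport–Schinzel sequence of order `s`
using at most `n` distinct symbols. -/
noncomputable def lambdaDS (s n : ℕ) : ℕ :=
  sSup {L | ∃ S : List ℕ, IsDS s S ∧ S.toFinset.card ≤ n ∧ S.length = L}

/-- `ψ_s(m,n)`: maximum length of a Davenport–Schinzel sequence of order `s` on at
most `n` distinct symbols partitionable into at most `m` blocks of distinct symbols. -/
noncomputable def psiDS (s m n : ℕ) : ℕ :=
  sSup {L | ∃ S : List ℕ, IsDS s S ∧ S.toFinset.card ≤ n ∧ HasBlocks S m ∧ S.length = L}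

/-- The Ackermann hierarchy: `A_1(n) = 2n`, and `A_k(n) = A_{k-1}^{(n)}(1)` for `k ≥ 2`. -/
def Ak : ℕ → ℕ → ℕ
  | 0, n => n + 1
  | 1, n => 2 * n
  | k + 2, n => (Ak (k + 1))^[n] 1

/-- The Ackermann function `A(n) = A_n(3)`. -/
def AckF (n : ℕ) : ℕ := Ak n 3

/-- `α_k(x) = min {n | A_k(n) ≥ x}`. -/
noncomputable def invAk (k x : ℕ) : ℕ := sInf {n | x ≤ Ak k n}

/-- `α(x) = min {n | A(n) ≥ x}`. -/
noncomputable def invA (x : ℕ) : ℕ := sInf {n | x ≤ AckF n}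

/-- An `ADS^s_k(m)`-sequence: at most `m` blocks of distinct symbols, every occurring
symbol appears at least `k` times, and no alternation of length `s + 2`. -/
def IsADS (s k m : ℕ) (S : List ℕ) : Prop :=
  HasBlocks S m ∧ (∀ a ∈ S, k ≤ S.count a) ∧ ¬ HasAlt S (s + 2)

/-- `N^s_k(m)`: the supremum (possibly infinite) of the number of distinct symbols
in an `ADS^s_k(m)`-sequence. -/
noncomputable def NADS (s k m : ℕ) : ℕ∞ :=
  sSup {c : ℕ∞ | ∃ S : List ℕ, IsADS s k m S ∧ c = (S.toFinset.card : ℕ∞)}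

/-- `S` is `r`-sparse: any at most `r` consecutive entries are pairwise distinct. -/
def Sparse (r : ℕ) (S : List ℕ) : Prop :=
  ∀ l : List ℕ, l <:+: S → l.length ≤ r → l.Nodup

/-- `S` contains the pattern `u`: some subsequence of `S` is an injectively renamed
copy of `u`. -/
def ContainsPat (S u : List ℕ) : Prop :=
  ∃ f : ℕ → ℕ, Set.InjOn f {a | a ∈ u} ∧ (u.map f).Sublist S

/-- `Ex_u(n)`: maximum length of an `r`-sparse `u`-free sequence on at most `n`
distinct symbols, where `r` is the number of distinct symbols of `u`. -/
noncomputable def ExDS (u : List ℕ) (n : ℕ) : ℕ :=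
  sSup {L | ∃ S : List ℕ, Sparse u.toFinset.card S ∧ ¬ ContainsPat S u ∧
    S.toFinset.card ≤ n ∧ S.length = L}

/-- An `(r,s)`-formation: a concatenation of `s` permutations of a single set of
`r` distinct symbols. -/
def IsFormation (r s : ℕ) (F : List ℕ) : Prop :=
  ∃ A : Finset ℕ, A.card = r ∧ ∃ Bs : List (List ℕ), Bs.length = s ∧
    (∀ B ∈ Bs, B.Nodup ∧ B.toFinset = A) ∧ F = Bs.flatten

/-- An `(r,s)`-formation-free sequence: `r`-sparse and containing no
`(r,s)`-formation as a subsequence. -/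
def FormationFree (r s : ℕ) (S : List ℕ) : Prop :=
  Sparse r S ∧ ¬ ∃ F : List ℕ, IsFormation r s F ∧ F.Sublist S

/-- `F_{r,s}(n)`: maximum length of an `(r,s)`-formation-free sequence on at most
`n` distinct symbols. -/
noncomputable def FDS (r s n : ℕ) : ℕ :=
  sSup {L | ∃ S : List ℕ, FormationFree r s S ∧ S.toFinset.card ≤ n ∧ S.length = L}

/-!
Cut a Davenport–Schinzel sequence `S` of order `s` greedily into maximal chunks containing no
alternation of length `s`. Each chunk is then a Davenport–Schinzel sequence of order `s - 2`, so
a chunk on `k` symbols has length at most `λ_{s-2}(k) ≤ k φ(n)`. At each chunk boundary the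
alternation of length `s` created by the previous symbol can be extended by one symbol on either
side unless the chunk holds the first or the last occurrence of some symbol; as `S` has no
alternation of length `s + 2`, each boundary is charged to a first or a last occurrence, so there
are at most `2n` chunks. Finally, deduplicating every chunk and removing the at most one repeated
symbol at each boundary gives a sequence counted by `ψ_s(2n, n)`, so the chunks carry at most
`ψ_s(2n, n) + 2n` distinct symbols in total.
-/

theorem altList_length (a b l : ℕ) : (altList a b l).length = l := by
  induction l generalizing a b with
  | zero => rfl
  | succ l ih => simp [altList, ih]

theorem altList_prefix_of_le (a b : ℕ) {k l : ℕ} (h : k ≤ l) :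
    altList a b k <+: altList a b l := by
  induction k generalizing a b l with
  | zero => exact List.nil_prefix
  | succ k ih =>
    obtain ⟨l, rfl⟩ : ∃ l', l = l' + 1 := ⟨l - 1, by omega⟩
    exact (List.prefix_cons_inj a).mpr (ih b a (by omega))

theorem exists_altList_succ_eq_append (a b l : ℕ) :
    ∃ e, (e = a ∨ e = b) ∧ altList a b (l + 1) = altList a b l ++ [e] := by
  induction l generalizing a b with
  | zero => exact ⟨a, Or.inl rfl, rfl⟩
  | succ l ih =>
    obtain ⟨e, he, heq⟩ := ih b a
    exact ⟨e, he.symm, by rw [altList, heq]; rfl⟩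

namespace HasAlt

variable {S T : List ℕ} {l : ℕ}

theorem length_le (h : HasAlt S l) : l ≤ S.length := by
  obtain ⟨a, b, -, hsub⟩ := h
  simpa [altList_length] using hsub.length_le

theorem sublist (h : HasAlt S l) (hST : S.Sublist T) : HasAlt T l := by
  obtain ⟨a, b, hab, hsub⟩ := h
  exact ⟨a, b, hab, hsub.trans hST⟩

theorem mono (h : HasAlt S l) {k : ℕ} (hkl : k ≤ l) : HasAlt S k := by
  obtain ⟨a, b, hab, hsub⟩ := h
  exact ⟨a, b, hab, (altList_prefix_of_le a b hkl).sublist.trans hsub⟩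

end HasAlt

theorem not_hasAlt_singleton {l : ℕ} (hl : 2 ≤ l) (a : ℕ) : ¬HasAlt [a] l := fun h => by
  simpa using h.length_le.trans_lt' (by omega : 1 < l)

theorem IsDS.nil (s : ℕ) : IsDS s [] :=
  ⟨List.IsChain.nil, fun h => by simpa using h.length_le⟩

theorem IsDS.mono {t s : ℕ} {S : List ℕ} (h : IsDS t S) (hts : t ≤ s) : IsDS s S :=
  ⟨h.1, fun hA => h.2 (hA.mono (by omega))⟩

theorem HasBlocks.mono {S : List ℕ} {m m' : ℕ} (h : HasBlocks S m) (hm : m ≤ m') :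
    HasBlocks S m' := by
  obtain ⟨Bs, hlen, rfl, hnd⟩ := h
  exact ⟨Bs, hlen.trans hm, rfl, hnd⟩

def dsLengths (s n : ℕ) : Set ℕ :=
  {L | ∃ S : List ℕ, IsDS s S ∧ S.toFinset.card ≤ n ∧ S.length = L}

theorem dsLengths_mono {t s k n : ℕ} (hts : t ≤ s) (hkn : k ≤ n) :
    dsLengths t k ⊆ dsLengths s n := by
  rintro L ⟨S, hS, hSk, rfl⟩
  exact ⟨S, hS.mono hts, hSk.trans hkn, rfl⟩

theorem exists_greedy_chunks {α : Type*} (P : List α → Prop) (hP : ∀ a, P [a]) (S : List α) :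
    ∃ Cs : List (List α), Cs.flatten = S ∧ (∀ C ∈ Cs, C ≠ [] ∧ P C) ∧
      Cs.IsChain (fun C D => ∀ c ∈ C.getLast?, ¬P (c :: D)) := by
  induction S with
  | nil => exact ⟨[], rfl, by simp, .nil⟩
  | cons a S ih =>
    obtain ⟨Cs, rfl, hCs, hchain⟩ := ih
    cases Cs with
    | nil => exact ⟨[[a]], rfl, by simpa using hP a, .singleton _⟩
    | cons C Ds =>
      have hC : C ≠ [] := (hCs C List.mem_cons_self).1
      by_cases haC : P (a :: C)
      · refine ⟨(a :: C) :: Ds, rfl, ?_, ?_⟩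
        · simpa [haC] using fun D hD => hCs D (List.mem_cons_of_mem C hD)
        · simpa [List.isChain_cons, List.getLast?_cons_of_ne_nil hC] using hchain
      · refine ⟨[a] :: C :: Ds, rfl, ?_,
          List.isChain_cons.mpr ⟨by simpa using haC, hchain⟩⟩
        simpa [hP a] using hCs

/-- Each chunk is charged to a symbol occurring in it for the first or for the last time; `X`
collects the symbols seen before `Cs`, which makes the induction go through. -/
theorem length_le_card_sdiff_add_card {α : Type*} [DecidableEq α] (Cs : List (List α))
    (X : Finset α)
    (h : ∀ Ls D Rs, Cs = Ls ++ D :: Rs →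
      ∃ w ∈ D, (w ∉ X ∧ w ∉ Ls.flatten) ∨ w ∉ Rs.flatten) :
    Cs.length ≤ (Cs.flatten.toFinset \ X).card + Cs.flatten.toFinset.card := by
  induction Cs generalizing X with
  | nil => simp
  | cons D Rs ih =>
    have hRs := ih (X ∪ D.toFinset) fun Ls D' Rs' hsplit => by
      obtain ⟨w, hw, hnew | hlast⟩ := h (D :: Ls) D' Rs' (by simp [hsplit])
      · exact ⟨w, hw, Or.inl (by simp_all)⟩
      · exact ⟨w, hw, Or.inr hlast⟩
    have hsdiff : Rs.flatten.toFinset \ (X ∪ D.toFinset) ⊆ (D :: Rs).flatten.toFinset \ X := by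
      intro x; simp +contextual
    have hsub : Rs.flatten.toFinset ⊆ (D :: Rs).flatten.toFinset := by
      intro x; simp +contextual
    obtain ⟨w, hwD, hnew | hlast⟩ := h [] D Rs rfl
    · have := Finset.card_lt_card <| (Finset.ssubset_iff_of_subset hsdiff).mpr
        ⟨w, by simp [hwD, hnew.1], by simp [hwD]⟩
      have := Finset.card_le_card hsub
      simp only [List.length_cons]
      omega
    · have := Finset.card_le_card hsdiff
      have := Finset.card_lt_card <| (Finset.ssubset_iff_of_subset hsub).mpr
        ⟨w, by simp [hwD], by simpa using hlast⟩
      simp only [List.length_cons]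
      omega

theorem length_le_two_mul_card {α : Type*} [DecidableEq α] (Cs : List (List α))
    (h : ∀ Ls D Rs, Cs = Ls ++ D :: Rs → ∃ w ∈ D, w ∉ Ls.flatten ∨ w ∉ Rs.flatten) :
    Cs.length ≤ 2 * Cs.flatten.toFinset.card := by
  simpa [two_mul] using length_le_card_sdiff_add_card Cs ∅ (by simpa using h)

/-- If the alternation `c y c y ⋯` of length `s` in `c :: D` is not already in `D`, then `D` holds
`y c y ⋯` of length `s - 1`; a `y` before `c` together with the letter continuing it after `D`
would give an alternation of length `s + 2`. -/
theorem exists_first_or_last_of_hasAlt_cons {s : ℕ} (hs : 3 ≤ s) {L D R : List ℕ} {c : ℕ}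
    (hcD : HasAlt (c :: D) s) (hD : ¬HasAlt D s) (hA : ¬HasAlt (L ++ c :: (D ++ R)) (s + 2)) :
    ∃ w ∈ D, w ∉ L ++ [c] ∨ w ∉ R := by
  obtain ⟨s, rfl⟩ : ∃ s', s = s' + 3 := ⟨s - 3, by omega⟩
  obtain ⟨x, y, hxy, hsub⟩ := hcD
  rcases List.sublist_cons_iff.mp hsub with hD' | ⟨r, hr, hrD⟩
  · exact absurd ⟨x, y, hxy, hD'⟩ hD
  obtain ⟨rfl, rfl⟩ : x = c ∧ altList y x (s + 2) = r := by simpa [altList] using hr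
  obtain ⟨e, he, hext⟩ := exists_altList_succ_eq_append y x (s + 2)
  have hyD : y ∈ D := hrD.subset (by simp [altList])
  have heD : e ∈ D := hrD.subset (by rcases he with rfl | rfl <;> simp [altList])
  by_contra! hcon
  have hyL : y ∈ L := by simpa [hxy.symm] using (hcon y hyD).1
  apply hA
  refine ⟨y, x, hxy.symm, ?_⟩
  rw [show altList y x (s + 3 + 2) = [y] ++ x :: altList y x (s + 3) from rfl, hext]
  exact (List.singleton_sublist.mpr hyL).append
    ((hrD.append (List.singleton_sublist.mpr (hcon e heD).2)).cons_cons x)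

theorem exists_chunks_of_not_hasAlt {s : ℕ} (hs : 3 ≤ s) {S : List ℕ}
    (hS : ¬HasAlt S (s + 2)) :
    ∃ Cs : List (List ℕ), Cs.flatten = S ∧ (∀ C ∈ Cs, C ≠ [] ∧ ¬HasAlt C s) ∧
      Cs.length ≤ 2 * S.toFinset.card := by
  obtain ⟨Cs, rfl, hCs, hchain⟩ :=
    exists_greedy_chunks (fun C => ¬HasAlt C s) (not_hasAlt_singleton (by omega)) S
  refine ⟨Cs, rfl, hCs, length_le_two_mul_card Cs fun Ls D Rs hsplit => ?_⟩
  have hD := hCs D (by simp [hsplit])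
  rcases List.eq_nil_or_concat Ls with rfl | ⟨Ls, C, rfl⟩
  · obtain ⟨w, hw⟩ := List.exists_mem_of_ne_nil D hD.1
    exact ⟨w, hw, Or.inl (by simp)⟩
  obtain ⟨C, c, rfl⟩ := (List.eq_nil_or_concat C).resolve_left (hCs C (by simp [hsplit])).1
  have hcD : HasAlt (c :: D) s := by
    subst hsplit
    simp only [List.concat_eq_append, List.append_assoc, List.singleton_append] at hchain
    exact not_not.mp ((List.isChain_append_cons_cons.mp hchain).2.1 c (by simp))
  simpa using exists_first_or_last_of_hasAlt_cons hs hcD hD.2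
    (L := Ls.flatten ++ C) (R := Rs.flatten) (by simpa [hsplit] using hS)

theorem flatten_map_dedup_sublist {α : Type*} [DecidableEq α] (Cs : List (List α)) :
    (Cs.map List.dedup).flatten.Sublist Cs.flatten := by
  induction Cs with
  | nil => simp
  | cons C Cs ih => simpa using (List.dedup_sublist C).append ih

theorem exists_isChain_sublist_hasBlocks (Bs : List (List ℕ)) (hnd : ∀ B ∈ Bs, B.Nodup) :
    ∃ T : List ℕ, T.Sublist Bs.flatten ∧ T.IsChain (· ≠ ·) ∧ HasBlocks T Bs.length ∧
      Bs.flatten.length ≤ T.length + Bs.length := by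
  induction Bs with
  | nil => exact ⟨[], .slnil, .nil, ⟨[], le_rfl, rfl, by simp⟩, le_rfl⟩
  | cons B Bs ih =>
    obtain ⟨_, hsub, hchain, ⟨Ts, hTslen, rfl, hTsnd⟩, hlen⟩ :=
      ih fun B' hB' => hnd B' (List.mem_cons_of_mem B hB')
    have hB := hnd B List.mem_cons_self
    by_cases hrep : ∃ e ∈ B.getLast?, e ∈ Ts.flatten.head?
    · obtain ⟨e, he, he'⟩ := hrep
      obtain ⟨E, rfl⟩ := List.getLast?_eq_some_iff.mp he
      have heE : e ∉ E := by simpa using List.disjoint_of_nodup_append hB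
      have hE : E.Nodup := hB.sublist (List.sublist_append_left E [e])
      refine ⟨E ++ Ts.flatten, ?_, ?_, ⟨E :: Ts, by simp; omega, rfl, ?_⟩, ?_⟩
      · simpa using (List.sublist_append_left E [e]).append hsub
      · refine List.isChain_append.mpr ⟨hE.isChain, hchain, fun x hx y hy => ?_⟩
        obtain rfl : y = e := Option.mem_unique hy he'
        exact fun hxe => heE (hxe ▸ List.mem_of_getLast? hx)
      · simpa [hE] using hTsnd
      · simp only [List.flatten_cons, List.length_append, List.length_cons, List.length_nil]; omega
    · push Not at hrep
      refine ⟨B ++ Ts.flatten, hsub.append_left B, ?_,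
        ⟨B :: Ts, by simp; omega, rfl, ?_⟩, ?_⟩
      · exact List.isChain_append.mpr
          ⟨hB.isChain, hchain, fun x hx y hy hxy => hrep x hx (hxy ▸ hy)⟩
      · simpa [hB] using hTsnd
      · simp only [List.flatten_cons, List.length_append, List.length_cons]; omega

section Bounds

variable {s n : ℕ}

theorem length_le_card_toFinset_mul {φ : ℕ → ℝ} (hmono : Monotone φ)
    (hbound : ∀ k : ℕ, 1 ≤ k → (lambdaDS s k : ℝ) ≤ (k : ℝ) * φ k)
    (hbdd : BddAbove (dsLengths s n)) {C : List ℕ} (hC : IsDS s C) (hne : C ≠ [])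
    (hCn : C.toFinset.card ≤ n) : (C.length : ℝ) ≤ C.toFinset.card * φ n := by
  have hk : 1 ≤ C.toFinset.card := Finset.card_pos.mpr ((List.toFinset_nonempty_iff C).mpr hne)
  calc (C.length : ℝ)
      ≤ lambdaDS s C.toFinset.card := by
        exact_mod_cast le_csSup (hbdd.mono (dsLengths_mono le_rfl hCn)) ⟨C, hC, le_rfl, rfl⟩
    _ ≤ C.toFinset.card * φ C.toFinset.card := hbound _ hk
    _ ≤ C.toFinset.card * φ n := by gcongr; exact hmono hCn

theorem length_flatten_le_psiDS_add {m : ℕ} (hbdd : BddAbove (dsLengths s n))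
    {Bs : List (List ℕ)} (hnd : ∀ B ∈ Bs, B.Nodup) (hm : Bs.length ≤ m) {S : List ℕ}
    (hsub : Bs.flatten.Sublist S) (hS : ¬HasAlt S (s + 2)) (hSn : S.toFinset.card ≤ n) :
    Bs.flatten.length ≤ psiDS s m n + m := by
  obtain ⟨T, hTsub, hT, hTblocks, hlen⟩ := exists_isChain_sublist_hasBlocks Bs hnd
  have hTS : T.Sublist S := hTsub.trans hsub
  have hTn : T.toFinset.card ≤ n :=
    (Finset.card_le_card fun x hx => by simpa using hTS.subset (by simpa using hx)).trans hSn
  have hψ : T.length ≤ psiDS s m n :=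
    le_csSup
      (hbdd.mono fun _ ⟨S, hS, hSn, _, hlen⟩ => (⟨S, hS, hSn, hlen⟩ : _ ∈ dsLengths s n))
      ⟨T, ⟨hT, fun h => hS (h.sublist hTS)⟩, hTn, hTblocks.mono hm, rfl⟩
  omega

theorem length_le_of_isDS (hs : 3 ≤ s) {φ : ℕ → ℝ} (hmono : Monotone φ)
    (hpos : 0 ≤ φ n)
    (hbound : ∀ k : ℕ, 1 ≤ k → (lambdaDS (s - 2) k : ℝ) ≤ (k : ℝ) * φ k)
    (hbdd : BddAbove (dsLengths s n)) {S : List ℕ} (hS : IsDS s S) (hSn : S.toFinset.card ≤ n) :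
    (S.length : ℝ) ≤ φ n * ((psiDS s (2 * n) n : ℝ) + 2 * (n : ℝ)) := by
  obtain ⟨Cs, rfl, hCs, hm⟩ := exists_chunks_of_not_hasAlt hs hS.2
  have hchunk : ∀ C ∈ Cs, (C.length : ℝ) ≤ C.dedup.length * φ n := fun C hC => by
    have hCDS : IsDS (s - 2) C :=
      ⟨(hS.1 : Cs.flatten.IsChain _).infix (List.infix_of_mem_flatten hC),
        by rw [Nat.sub_add_cancel (by omega)]; exact (hCs C hC).2⟩
    have hCn : C.toFinset.card ≤ n := (Finset.card_le_card fun x hx => by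
      simpa using ⟨C, hC, by simpa using hx⟩).trans hSn
    rw [← List.card_toFinset]
    exact length_le_card_toFinset_mul hmono hbound
      (hbdd.mono (dsLengths_mono (Nat.sub_le s 2) le_rfl)) hCDS (hCs C hC).1 hCn
  have hψ : (Cs.map List.dedup).flatten.length ≤ psiDS s (2 * n) n + 2 * n :=
    length_flatten_le_psiDS_add hbdd (by simp [List.nodup_dedup]) (by simp; omega)
      (flatten_map_dedup_sublist Cs) hS.2 hSn
  calc (Cs.flatten.length : ℝ)
      = (Cs.map fun C => (C.length : ℝ)).sum := by simp [List.length_flatten, Function.comp_def]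
    _ ≤ (Cs.map fun C => (C.dedup.length : ℝ) * φ n).sum := List.sum_le_sum hchunk
    _ = (Cs.map List.dedup).flatten.length * φ n := by
        simp [List.length_flatten, List.sum_map_mul_right, Function.comp_def]
    _ ≤ ((psiDS s (2 * n) n : ℝ) + 2 * (n : ℝ)) * φ n := by gcongr; exact_mod_cast hψ
    _ = φ n * ((psiDS s (2 * n) n : ℝ) + 2 * (n : ℝ)) := mul_comm _ _

end Bounds

/-- If `s ≥ 3` and `φ` is a nondecreasing nonnegative function with `λ_{s-2}(n) ≤ n·φ(n)`
for all `n ≥ 1`, then `λ_s(n) ≤ φ(n)·(ψ_s(2n,n) + 2n)` for every `n ≥ 1`. -/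
theorem lambda_to_psi (s : ℕ) (hs : 3 ≤ s) (φ : ℕ → ℝ) (hmono : Monotone φ)
    (hpos : ∀ n : ℕ, 0 ≤ φ n)
    (hbound : ∀ n : ℕ, 1 ≤ n → (lambdaDS (s - 2) n : ℝ) ≤ (n : ℝ) * φ n) :
    ∀ n : ℕ, 1 ≤ n →
      (lambdaDS s n : ℝ) ≤ φ n * ((psiDS s (2 * n) n : ℝ) + 2 * (n : ℝ)) := by
  intro n _
  by_cases hbdd : BddAbove (dsLengths s n)
  · have hnil : 0 ∈ dsLengths s n := ⟨[], IsDS.nil s, by simp, rfl⟩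
    obtain ⟨S, hS, hSn, hlen⟩ := Nat.sSup_mem ⟨0, hnil⟩ hbdd
    rw [lambdaDS, ← dsLengths, ← hlen]
    exact length_le_of_isDS hs hmono (hpos n) hbound hbdd hS hSn
  · -- unbounded lengths: `sSup` on `ℕ` takes the junk value `0`
    have hzero : lambdaDS s n = 0 := by
      rw [lambdaDS, ← dsLengths, csSup_of_not_bddAbove hbdd, csSup_empty]; rfl
    rw [hzero, Nat.cast_zero]
    exact mul_nonneg (hpos n) (by positivity)
end

section
/- There exists an absolute constant c such that for all integers k ≥ 2 and m, n ≥ 1, ψ_3(m,n) ≤ c·(k·m·α_k(m) + k·n). -/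
/-! Write the sequence as a list `Bs` of blocks and induct on the level `k` of the Ackermann
hierarchy and, inside a level, on `j` with `|Bs| ≤ A_k(j)`. Cut `Bs` into segments of
`s = A_k(j - 1)` blocks. Within a segment a symbol is *local* (it occurs in no other segment),
*starting* or *ending* (this is its first or its last segment), or *middle*. Local symbols are
handled by induction on `j`, segment by segment. A repetition `a b a` of middle symbols, or
`a b a b` of starting (ending) symbols, inside a segment would extend by an occurrence outside the
segment to `a b a b a`. Hence starting and ending symbols cost at most `#blocks + 2 #symbols` per
segment, and middle symbols `#blocks` plus one occurrence of each. Those occurrences form a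
contracted sequence with one block per segment, bounded at level `k - 1` with
`α_{k-1}(#segments) ≤ s` (at level `2` there are at most two segments).

The bound is `6 (k - 1) j (|Bs| - 1) + 4 k n`: charging `|Bs| - 1` block boundaries instead of
`|Bs|` blocks makes the contracted sequence cost at most `6 (k - 2) (|Bs| - 1)`, so the factor in
front of `j` grows additively with the level. -/

open scoped List Finset

theorem HasAlt.mono_s7 {S T : List ℕ} {l : ℕ} (h : HasAlt S l) (hST : S <+ T) : HasAlt T l :=
  let ⟨a, b, hab, hS⟩ := h
  ⟨a, b, hab, hS.trans hST⟩

theorem List.pair_sublist_or {α : Type*} {C : List α} {a b : α} (ha : a ∈ C) (hb : b ∈ C)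
    (hab : a ≠ b) : [a, b] <+ C ∨ [b, a] <+ C := by
  induction C with
  | nil => simp at ha
  | cons x t ih =>
    rcases List.mem_cons.1 ha with rfl | ha' <;> rcases List.mem_cons.1 hb with rfl | hb'
    · exact absurd rfl hab
    · exact .inl ((List.singleton_sublist.2 hb').cons_cons a)
    · exact .inr ((List.singleton_sublist.2 ha').cons_cons b)
    · exact (ih ha' hb').imp (·.cons x) (·.cons x)

theorem List.length_eq_length_filter_four {α : Type*} (l : List α) (p q : α → Prop)
    [DecidablePred p] [DecidablePred q] :
    l.length = (l.filter fun a => p a ∧ q a).length + (l.filter fun a => ¬p a ∧ q a).length +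
      (l.filter fun a => p a ∧ ¬q a).length + (l.filter fun a => ¬p a ∧ ¬q a).length := by
  induction l with
  | nil => rfl
  | cons x l ih =>
    simp only [List.filter_cons]
    by_cases p x <;> by_cases q x <;> simp [*] <;> omega

theorem List.exists_chunks {α : Type*} {s : ℕ} (hs : 0 < s) (L : List α) :
    ∃ P : List (List α), P.flatten = L ∧ (∀ W ∈ P, W ≠ [] ∧ W.length ≤ s) ∧
      L.length ≤ P.length * s ∧ P.length * s < L.length + s := by
  by_cases hL : L.length ≤ s
  · by_cases h0 : L = []
    · exact ⟨[], by simp [h0], by simp, by simp [h0], by simpa [h0]⟩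
    · have := List.length_pos_of_ne_nil h0
      exact ⟨[L], by simp, by simpa using ⟨h0, hL⟩, by simpa using hL, by simp; omega⟩
  · obtain ⟨P, hP, hW, hle, hlt⟩ := List.exists_chunks hs (L.drop s)
    have hdrop : (L.drop s).length = L.length - s := List.length_drop
    refine ⟨L.take s :: P, by simp [hP], ?_, ?_, ?_⟩
    · refine List.forall_mem_cons.2 ⟨⟨fun h => ?_, List.length_take_le _ _⟩, hW⟩
      have := congrArg List.length h
      simp only [List.length_take, List.length_nil] at this
      omega
    · rw [List.length_cons, Nat.succ_mul]
      omega
    · rw [List.length_cons, Nat.succ_mul]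
      omega
termination_by L.length
decreasing_by simp; omega

namespace DavenportSchinzel

theorem ak_succ_succ (k j : ℕ) : Ak (k + 2) (j + 1) = Ak (k + 1) (Ak (k + 2) j) :=
  Function.iterate_succ_apply' _ _ _

theorem lt_ak : ∀ (k y : ℕ), 0 < y → y < Ak (k + 1) y
  | 0, y, hy => by change y < 2 * y; omega
  | k + 1, 0, hy => absurd hy (lt_irrefl 0)
  | k + 1, y + 1, _ => by
    rw [ak_succ_succ]
    rcases Nat.eq_zero_or_pos y with rfl | hy
    · exact lt_ak k 1 one_pos
    · have h := lt_ak (k + 1) y hy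
      exact Nat.lt_of_le_of_lt h (lt_ak k _ (Nat.zero_lt_of_lt h))

theorem lt_ak_self (k y : ℕ) : y < Ak (k + 2) y := by
  rcases Nat.eq_zero_or_pos y with rfl | hy
  · exact one_pos
  · exact lt_ak (k + 1) y hy

theorem le_ak_invAk (k x : ℕ) : x ≤ Ak (k + 2) (invAk (k + 2) x) :=
  Nat.sInf_mem (⟨x, (lt_ak_self k x).le⟩ : {j | x ≤ Ak (k + 2) j}.Nonempty)

section Counting

variable {α : Type*} [DecidableEq α]

theorem card_filter_le_one_of_pair (C : List α) (p : α → Prop) [DecidablePred p]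
    (h : ∀ a b, a ≠ b → [a, b] <+ C → p a → p b → False) : #{a ∈ C.toFinset | p a} ≤ 1 := by
  refine Finset.card_le_one.2 fun a ha b hb => by_contra fun hab => ?_
  simp only [Finset.mem_filter, List.mem_toFinset] at ha hb
  rcases List.pair_sublist_or ha.1 hb.1 hab with hC | hC
  · exact h a b hab hC ha.2 hb.2
  · exact h b a (Ne.symm hab) hC hb.2 ha.2

theorem card_filter_notMem_append (l r pre : List α) :
    #{a ∈ (l ++ r).toFinset | a ∉ pre} =
      #{a ∈ l.toFinset | a ∉ pre} + #{a ∈ r.toFinset | a ∉ pre ++ l} := by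
  rw [← Finset.card_union_of_disjoint]
  · congr 1
    ext a
    simp only [Finset.mem_filter, Finset.mem_union, List.mem_toFinset, List.mem_append]
    tauto
  · simp only [Finset.disjoint_left, Finset.mem_filter, List.mem_toFinset, List.mem_append]
    tauto

theorem card_toFinset_append (l r : List α) :
    #(l ++ r).toFinset = #{a ∈ l.toFinset | a ∉ r} + #r.toFinset := by
  rw [← Finset.card_union_of_disjoint]
  · congr 1
    ext a
    simp only [Finset.mem_filter, Finset.mem_union, List.mem_toFinset, List.mem_append]
    tauto
  · simp only [Finset.disjoint_left, Finset.mem_filter, List.mem_toFinset]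
    tauto

theorem card_local_add_card_start (W pre post : List α) :
    #{a ∈ W.toFinset | a ∉ pre ∧ a ∉ post} + #{a ∈ W.toFinset | a ∉ pre ∧ a ∈ post} +
      #{a ∈ post.toFinset | a ∉ pre ++ W} = #{a ∈ (W ++ post).toFinset | a ∉ pre} := by
  rw [card_filter_notMem_append, ← Finset.filter_filter, ← Finset.filter_filter, add_comm
    #{a ∈ _ | a ∉ post}, Finset.card_filter_add_card_filter_not]

theorem card_local_add_card_end (W pre post : List α) :
    #{a ∈ W.toFinset | a ∉ pre ∧ a ∉ post} + #{a ∈ W.toFinset | a ∈ pre ∧ a ∉ post} +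
      #post.toFinset = #(W ++ post).toFinset := by
  rw [card_toFinset_append, ← Finset.card_filter_add_card_filter_not
    (s := {a ∈ W.toFinset | a ∉ post}) (· ∈ pre), Finset.filter_filter, Finset.filter_filter]
  simp only [and_comm, add_comm]

theorem card_filter_notMem_middle_append_le (W pre : List α) {T post : List α} (hT : T ⊆ post) :
    #{a ∈ ((W.filter fun a => a ∈ pre ∧ a ∈ post).dedup ++ T).toFinset | a ∉ pre} ≤
      #{a ∈ W.toFinset | a ∉ pre ∧ a ∈ post} + #{a ∈ T.toFinset | a ∉ pre ++ W} := by
  refine (Finset.card_le_card fun a ha => ?_).trans (Finset.card_union_le _ _)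
  simp only [Finset.mem_filter, Finset.mem_union, List.mem_toFinset, List.mem_append,
    List.mem_dedup, List.mem_filter, decide_eq_true_eq] at ha ⊢
  have := @hT a
  tauto

theorem length_flatten_le_mul_card {Bs : List (List α)} (hnd : ∀ C ∈ Bs, C.Nodup) :
    Bs.flatten.length ≤ Bs.length * #Bs.flatten.toFinset := by
  rw [List.length_flatten]
  simpa using List.sum_le_card_nsmul (Bs.map List.length) _ fun x hx => by
    obtain ⟨C, hC, rfl⟩ := List.mem_map.1 hx
    rw [← List.toFinset_card_of_nodup (hnd C hC)]
    exact Finset.card_le_card fun a ha => by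
      simp only [List.mem_toFinset, List.mem_flatten] at ha ⊢
      exact ⟨C, hC, ha⟩

end Counting

theorem length_flatten_le_of_not_hasAlt_three_append (Cs : List (List ℕ))
    (hCs : ∀ C ∈ Cs, C.Nodup) :
    ∀ pre : List ℕ, ¬HasAlt (pre ++ Cs.flatten) 3 →
      Cs.flatten.length ≤ Cs.length + #{a ∈ Cs.flatten.toFinset | a ∉ pre} := by
  induction Cs with
  | nil => simp
  | cons C Cs ih =>
    intro pre h
    rw [List.forall_mem_cons] at hCs
    have hC : C.length = #{a ∈ C.toFinset | a ∈ pre} + #{a ∈ C.toFinset | a ∉ pre} := by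
      rw [Finset.card_filter_add_card_filter_not, List.toFinset_card_of_nodup hCs.1]
    have hrepeat : #{a ∈ C.toFinset | a ∈ pre} ≤ 1 :=
      card_filter_le_one_of_pair C _ fun a b hab hC ha hb =>
        h ⟨b, a, hab.symm, (List.singleton_sublist.2 hb).append
          (hC.trans (List.sublist_append_left _ _))⟩
    have hrest := ih hCs.2 (pre ++ C) (by rwa [List.append_assoc])
    rw [List.flatten_cons, List.length_append, card_filter_notMem_append, List.length_cons]
    omega

theorem length_flatten_le_of_not_hasAlt_four_append (Cs : List (List ℕ))
    (hCs : ∀ C ∈ Cs, C.Nodup) :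
    ∀ pre : List ℕ, ¬HasAlt (pre ++ Cs.flatten) 4 →
      Cs.flatten.length ≤
        Cs.length + #{a ∈ Cs.flatten.toFinset | a ∉ pre} + #Cs.flatten.toFinset := by
  induction Cs with
  | nil => simp
  | cons C Cs ih =>
    intro pre h
    rw [List.forall_mem_cons] at hCs
    have hC : C.length = #{a ∈ C.toFinset | a ∈ pre ∧ a ∈ Cs.flatten} +
        #{a ∈ C.toFinset | ¬(a ∈ pre ∧ a ∈ Cs.flatten)} := by
      rw [Finset.card_filter_add_card_filter_not, List.toFinset_card_of_nodup hCs.1]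
    have hrepeat : #{a ∈ C.toFinset | a ∈ pre ∧ a ∈ Cs.flatten} ≤ 1 :=
      card_filter_le_one_of_pair C _ fun a b hab hC ha hb =>
        h ⟨b, a, hab.symm, (List.singleton_sublist.2 hb.1).append
          (hC.append (List.singleton_sublist.2 ha.2))⟩
    have hfirst_or_last : #{a ∈ C.toFinset | ¬(a ∈ pre ∧ a ∈ Cs.flatten)} ≤
        #{a ∈ C.toFinset | a ∉ pre} + #{a ∈ C.toFinset | a ∉ Cs.flatten} := by
      refine (Finset.card_le_card fun a => ?_).trans (Finset.card_union_le _ _)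
      simp only [Finset.mem_filter, Finset.mem_union]
      tauto
    have hrest := ih hCs.2 (pre ++ C) (by rwa [List.append_assoc])
    rw [List.flatten_cons, List.length_append, card_filter_notMem_append, card_toFinset_append,
      List.length_cons]
    omega

theorem length_filter_le_of_not_hasAlt_three {W : List (List ℕ)} (hW : ∀ C ∈ W, C.Nodup)
    (p : ℕ → Prop) [DecidablePred p] (h : ¬HasAlt (W.flatten.filter (p ·)) 3) :
    (W.flatten.filter (p ·)).length ≤ W.length + #{a ∈ W.flatten.toFinset | p a} := by
  have := length_flatten_le_of_not_hasAlt_three_append (W.map (List.filter (p ·)))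
    (by simpa using fun C hC => (hW C hC).filter _) [] (by rwa [← List.filter_flatten])
  simpa [← List.filter_flatten] using this

theorem length_filter_le_of_not_hasAlt_four {W : List (List ℕ)} (hW : ∀ C ∈ W, C.Nodup)
    (p : ℕ → Prop) [DecidablePred p] (h : ¬HasAlt (W.flatten.filter (p ·)) 4) :
    (W.flatten.filter (p ·)).length ≤ W.length + 2 * #{a ∈ W.flatten.toFinset | p a} := by
  have := length_flatten_le_of_not_hasAlt_four_append (W.map (List.filter (p ·)))
    (by simpa using fun C hC => (hW C hC).filter _) [] (by rwa [← List.filter_flatten])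
  simpa [← List.filter_flatten, two_mul, add_assoc] using this

theorem length_flatten_segment_le {W : List (List ℕ)} (hW : ∀ C ∈ W, C.Nodup)
    (pre post : List ℕ) (h : ¬HasAlt (pre ++ W.flatten ++ post) 5) :
    W.flatten.length ≤ 3 * W.length + (W.flatten.filter fun a => a ∉ pre ∧ a ∉ post).length +
      #{a ∈ W.flatten.toFinset | a ∈ pre ∧ a ∈ post} +
      2 * #{a ∈ W.flatten.toFinset | a ∉ pre ∧ a ∈ post} +
      2 * #{a ∈ W.flatten.toFinset | a ∈ pre ∧ a ∉ post} := by
  have hmiddle := length_filter_le_of_not_hasAlt_three hW (fun a => a ∈ pre ∧ a ∈ post)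
    fun ⟨a, b, hab, hs⟩ => by
      have hb := List.mem_filter.1 (hs.subset (show b ∈ altList a b 3 by simp [altList]))
      simp only [decide_eq_true_eq] at hb
      exact h ⟨b, a, hab.symm, ((List.singleton_sublist.2 hb.2.1).append
        (hs.trans List.filter_sublist)).append (List.singleton_sublist.2 hb.2.2)⟩
  have hstart := length_filter_le_of_not_hasAlt_four hW (fun a => a ∉ pre ∧ a ∈ post)
    fun ⟨a, b, hab, hs⟩ => by
      have ha := List.mem_filter.1 (hs.subset (show a ∈ altList a b 4 by simp [altList]))
      simp only [decide_eq_true_eq] at ha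
      exact h ⟨a, b, hab, ((hs.trans List.filter_sublist).append
        (List.singleton_sublist.2 ha.2.2)).trans
          ((List.sublist_append_right pre _).append (List.Sublist.refl post))⟩
  have hend := length_filter_le_of_not_hasAlt_four hW (fun a => a ∈ pre ∧ a ∉ post)
    fun ⟨a, b, hab, hs⟩ => by
      have hb := List.mem_filter.1 (hs.subset (show b ∈ altList a b 4 by simp [altList]))
      simp only [decide_eq_true_eq] at hb
      exact h ⟨b, a, hab.symm, ((List.singleton_sublist.2 hb.2.1).append
        (hs.trans List.filter_sublist)).trans (List.sublist_append_left _ post)⟩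
  have := W.flatten.length_eq_length_filter_four (· ∈ pre) (· ∈ post)
  omega

/-- `lc`, `st` and `en` are the numbers of local, starting and ending symbols, summed over the
segments of `P`; the block of `Ts` for a segment lists its middle symbols once each. -/
theorem exists_contraction_of_prefix {s G c : ℕ}
    (hloc : ∀ Cs : List (List ℕ), (∀ C ∈ Cs, C.Nodup) → ¬HasAlt Cs.flatten 5 → Cs.length ≤ s →
      Cs.flatten.length ≤ G * (Cs.length - 1) + c * #Cs.flatten.toFinset) :
    ∀ (P : List (List (List ℕ))) (pre : List ℕ), (∀ W ∈ P, W ≠ [] ∧ W.length ≤ s) →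
      (∀ W ∈ P, ∀ C ∈ W, C.Nodup) → ¬HasAlt (pre ++ P.flatten.flatten) 5 →
      ∃ (Ts : List (List ℕ)) (lc st en : ℕ), Ts.length = P.length ∧ (∀ C ∈ Ts, C.Nodup) ∧
        Ts.flatten <+ P.flatten.flatten ∧
        lc + st ≤ #{a ∈ P.flatten.flatten.toFinset | a ∉ pre} ∧
        lc + en ≤ #P.flatten.flatten.toFinset ∧
        #{a ∈ Ts.flatten.toFinset | a ∉ pre} ≤ st ∧
        P.flatten.flatten.length + G * P.length ≤
          (G + 3) * P.flatten.length + c * lc + 2 * (st + en) + Ts.flatten.length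
  | [], pre, _, _, _ => ⟨[], 0, 0, 0, by simp⟩
  | W :: P, pre, hP, hnd, h => by
    rw [List.forall_mem_cons] at hP hnd
    rw [List.flatten_cons, List.flatten_append] at h ⊢
    obtain ⟨Ts, lc, st, en, hlen, hTs, hsub, hfirst, hlast, hnew, hbound⟩ :=
      exists_contraction_of_prefix hloc P (pre ++ W.flatten) hP.2 hnd.2
        (by rwa [List.append_assoc])
    set A := P.flatten.flatten
    have hseg := length_flatten_segment_le hnd.1 pre A (by rwa [List.append_assoc])
    have hlocal := hloc (W.map (List.filter fun a => a ∉ pre ∧ a ∉ A))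
      (by simpa using fun C hC => (hnd.1 C hC).filter _)
      (fun hW => h (hW.mono_s7 (by
        rw [← List.filter_flatten]
        exact List.filter_sublist.trans ((List.sublist_append_left _ A).trans
          (List.sublist_append_right pre _)))))
      (by simpa using hP.1.2)
    simp only [← List.filter_flatten, List.length_map, List.toFinset_filter, decide_eq_true_eq]
      at hlocal
    have hmiddle : (W.flatten.filter fun a => a ∈ pre ∧ a ∈ A).dedup.length =
        #{a ∈ W.flatten.toFinset | a ∈ pre ∧ a ∈ A} := by
      rw [← List.card_toFinset, List.toFinset_filter]
      simp
    refine ⟨(W.flatten.filter fun a => a ∈ pre ∧ a ∈ A).dedup :: Ts,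
      #{a ∈ W.flatten.toFinset | a ∉ pre ∧ a ∉ A} + lc,
      #{a ∈ W.flatten.toFinset | a ∉ pre ∧ a ∈ A} + st,
      #{a ∈ W.flatten.toFinset | a ∈ pre ∧ a ∉ A} + en, by simp [hlen], ?_, ?_, ?_, ?_, ?_, ?_⟩
    · simpa using ⟨List.nodup_dedup _, hTs⟩
    · exact ((List.dedup_sublist _).trans List.filter_sublist).append hsub
    · have := card_local_add_card_start W.flatten pre A
      omega
    · have := card_local_add_card_end W.flatten pre A
      omega
    · rw [List.flatten_cons]
      have := card_filter_notMem_middle_append_le W.flatten pre hsub.subset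
      omega
    · have hG : G * (W.length - 1) + G = G * W.length := by
        rw [← Nat.mul_succ, Nat.succ_eq_add_one, Nat.sub_add_cancel
          (List.length_pos_of_ne_nil hP.1.1)]
      simp only [List.flatten_cons, List.length_append, List.length_cons, hmiddle]
      linarith

theorem exists_contraction {s G c : ℕ} (hs : 0 < s)
    (hloc : ∀ Cs : List (List ℕ), (∀ C ∈ Cs, C.Nodup) → ¬HasAlt Cs.flatten 5 → Cs.length ≤ s →
      Cs.flatten.length ≤ G * (Cs.length - 1) + c * #Cs.flatten.toFinset)
    (Bs : List (List ℕ)) (hnd : ∀ C ∈ Bs, C.Nodup) (h : ¬HasAlt Bs.flatten 5) :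
    ∃ (Ts : List (List ℕ)) (lc st en : ℕ), (∀ C ∈ Ts, C.Nodup) ∧ ¬HasAlt Ts.flatten 5 ∧
      Bs.length ≤ Ts.length * s ∧ Ts.length * s < Bs.length + s ∧
      lc + st ≤ #Bs.flatten.toFinset ∧ lc + en ≤ #Bs.flatten.toFinset ∧
      #Ts.flatten.toFinset ≤ st ∧
      Bs.flatten.length + G * Ts.length ≤
        (G + 3) * Bs.length + c * lc + 2 * (st + en) + Ts.flatten.length := by
  obtain ⟨P, rfl, hP, hle, hlt⟩ := List.exists_chunks hs Bs
  obtain ⟨Ts, lc, st, en, hlen, hTs, hsub, hfirst, hlast, hnew, hbound⟩ :=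
    exists_contraction_of_prefix hloc P [] hP
      (fun W hW C hC => hnd C (List.mem_flatten.2 ⟨W, hW, hC⟩)) (by simpa using h)
  refine ⟨Ts, lc, st, en, hTs, fun hT => h (hT.mono_s7 hsub), by rwa [hlen], by rwa [hlen],
    by simpa using hfirst, hlast, by simpa using hnew, by rwa [hlen]⟩

/-- `hcon` bounds the contracted sequence at level `k + 1`: it has one block per segment of `s`
blocks, and the segmented sequences have at most `A_{k+2}(j + 1) = A_{k+1}(s)` blocks. -/
theorem length_flatten_le_of_contraction_bound (k D : ℕ)
    (hcon : ∀ (s : ℕ) (Ts : List (List ℕ)), 0 < s → (∀ C ∈ Ts, C.Nodup) →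
      ¬HasAlt Ts.flatten 5 → (Ts.length - 1) * s < Ak (k + 1) s →
      Ts.flatten.length ≤ D * ((Ts.length - 1) * s) + 4 * (k + 1) * #Ts.flatten.toFinset)
    (j : ℕ) :
    ∀ Bs : List (List ℕ), (∀ C ∈ Bs, C.Nodup) → ¬HasAlt Bs.flatten 5 →
      Bs.length ≤ Ak (k + 2) j →
      Bs.flatten.length ≤ (D + 6) * j * (Bs.length - 1) + 4 * (k + 2) * #Bs.flatten.toFinset := by
  induction j with
  | zero =>
    intro Bs hnd _ hlen
    have hone : Bs.length ≤ 1 := hlen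
    have := length_flatten_le_mul_card hnd
    nlinarith
  | succ j ih =>
    intro Bs hnd h hlen
    have hs : 0 < Ak (k + 2) j := (Nat.zero_le j).trans_lt (lt_ak_self k j)
    by_cases hsmall : Bs.length ≤ Ak (k + 2) j
    · exact (ih Bs hnd h hsmall).trans (by gcongr; omega)
    obtain ⟨Ts, lc, st, en, hTs, hT, hle, hlt, hfirst, hlast, hnew, hbound⟩ :=
      exists_contraction hs ih Bs hnd h
    rw [ak_succ_succ] at hlen
    set s := Ak (k + 2) j
    have hsb : (Ts.length - 1) * s < Bs.length := by rw [Nat.sub_one_mul]; omega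
    have hcT := hcon s Ts hs hTs hT (hsb.trans_le hlen)
    have hb : 0 < Ts.length := Nat.pos_of_ne_zero fun h0 => by rw [h0, zero_mul] at hle; omega
    have h1 : D * ((Ts.length - 1) * s) ≤ D * (Bs.length - 1) := by gcongr; omega
    have h2 : (D + 6) * j ≤ (D + 6) * j * Ts.length := Nat.le_mul_of_pos_right _ hb
    have h3 : (k + 2) * (lc + st) ≤ (k + 2) * #Bs.flatten.toFinset := by gcongr
    have h4 : (k + 1) * #Ts.flatten.toFinset ≤ (k + 1) * st := by gcongr
    have h5 : (D + 6) * j * Bs.length = (D + 6) * j * (Bs.length - 1) + (D + 6) * j := by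
      rw [← Nat.mul_succ]; congr; omega
    have h6 : Bs.length = (Bs.length - 1) + 1 := by omega
    nlinarith

theorem length_flatten_le (k j : ℕ) (Bs : List (List ℕ)) (hnd : ∀ C ∈ Bs, C.Nodup)
    (h : ¬HasAlt Bs.flatten 5) (hlen : Bs.length ≤ Ak (k + 2) j) :
    Bs.flatten.length ≤
      6 * (k + 1) * j * (Bs.length - 1) + 4 * (k + 2) * #Bs.flatten.toFinset := by
  induction k generalizing j Bs with
  | zero =>
    refine (length_flatten_le_of_contraction_bound 0 0 (fun s Ts hs hTs _ hb => ?_) j Bs hnd h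
      hlen).trans_eq (by ring)
    have hTs2 : Ts.length ≤ 2 := by
      have : (Ts.length - 1) * s < 2 * s := hb
      have := Nat.lt_of_mul_lt_mul_right this
      omega
    have := length_flatten_le_mul_card hTs
    nlinarith
  | succ k ih =>
    refine (length_flatten_le_of_contraction_bound (k + 1) (6 * (k + 1))
      (fun s Ts hs hTs hT hb => ?_) j Bs hnd h hlen).trans_eq (by ring)
    have hbA : Ts.length ≤ Ak (k + 2) s := by
      have hb : (Ts.length - 1) * s < Ak (k + 2) s := hb
      have := Nat.le_mul_of_pos_right (Ts.length - 1) hs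
      omega
    have ht : invAk (k + 2) Ts.length ≤ s := Nat.sInf_le hbA
    refine (ih _ Ts hTs hT (le_ak_invAk k _)).trans ?_
    have : invAk (k + 2) Ts.length * (Ts.length - 1) ≤ (Ts.length - 1) * s := by
      rw [mul_comm]; gcongr
    nlinarith

end DavenportSchinzel

open DavenportSchinzel in
/-- There is an absolute constant `c` with `ψ_3(m,n) ≤ c·(k·m·α_k(m) + k·n)` for all
`k ≥ 2`, `m, n ≥ 1`. -/
theorem psi3_upper :
    ∃ c : ℝ, ∀ k m n : ℕ, 2 ≤ k → 1 ≤ m → 1 ≤ n →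
      (psiDS 3 m n : ℝ) ≤ c * ((k : ℝ) * (m : ℝ) * (invAk k m : ℝ) + (k : ℝ) * (n : ℝ)) := by
  refine ⟨6, fun k m n hk _ _ => ?_⟩
  obtain ⟨k, rfl⟩ : ∃ k', k = k' + 2 := ⟨k - 2, by omega⟩
  have hpsi : psiDS 3 m n ≤ 6 * ((k + 2) * m * invAk (k + 2) m + (k + 2) * n) := by
    refine csSup_le' ?_
    rintro _ ⟨S, hS, hn, ⟨Bs, hm, rfl, hnd⟩, rfl⟩
    calc Bs.flatten.length
        ≤ 6 * (k + 1) * invAk (k + 2) m * (Bs.length - 1) +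
            4 * (k + 2) * #Bs.flatten.toFinset :=
          length_flatten_le k _ Bs hnd hS.2 (hm.trans (le_ak_invAk k m))
      _ ≤ 6 * (k + 2) * invAk (k + 2) m * m + 6 * (k + 2) * n := by gcongr <;> omega
      _ = 6 * ((k + 2) * m * invAk (k + 2) m + (k + 2) * n) := by ring
  exact_mod_cast hpsi
end

section
/- For all positive integers s, k, m, n, ψ_s(m,n) ≤ k·(N^s_k(m) + n) (an inequality in the extended naturals, trivially true if N^s_k(m) is infinite). -/
/-!
Split the occurrences of each symbol `a` of a Davenport–Schinzel sequence `S` into consecutive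
chunks of `k`, drop the last incomplete chunk, and rename every chunk to a fresh symbol. The
renamed sequence keeps the block partition, each new symbol occurs exactly `k` times, and it has
no alternation of length `s + 2 ≥ 3`: chunks of distinct symbols would project to an alternation
in `S`, and two chunks of the same symbol never interleave as `x y x`. It is therefore an
`ADS^s_k(m)`-sequence on `∑ₐ ⌊cₐ / k⌋` symbols, where `cₐ` is the multiplicity of `a` in `S`,
while `|S| = ∑ₐ cₐ ≤ k ∑ₐ ⌊cₐ / k⌋ + k n`.
-/

lemma altList_sublist_add (a b l d : ℕ) : (altList a b l).Sublist (altList a b (l + d)) := by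
  induction l generalizing a b with
  | zero => exact List.nil_sublist _
  | succ l ih =>
    rw [Nat.add_right_comm]
    exact (ih b a).cons_cons a

lemma altList_map (f : ℕ → ℕ) (a b l : ℕ) :
    (altList a b l).map f = altList (f a) (f b) l := by
  induction l generalizing a b with
  | zero => rfl
  | succ l ih => simp [altList, ih]

lemma HasBlocks.filter {S : List ℕ} {m : ℕ} (h : HasBlocks S m) (p : ℕ → Bool) :
    HasBlocks (S.filter p) m := by
  obtain ⟨Bs, hlen, rfl, hnodup⟩ := h
  refine ⟨Bs.map (List.filter p), by simpa, List.filter_flatten, ?_⟩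
  simp only [List.mem_map]
  rintro _ ⟨B, hB, rfl⟩
  exact (hnodup B hB).filter p

lemma List.countP_range_div_eq {k : ℕ} (hk : 0 < k) (j c : ℕ) :
    (List.range c).countP (fun o => o / k = j) = min k (c - j * k) := by
  induction c with
  | zero => simp
  | succ c ih =>
    have hdiv : c / k = j ↔ j * k ≤ c ∧ c < j * k + k := by
      rw [Nat.div_eq_iff hk]; constructor <;> rintro ⟨h₁, h₂⟩ <;> constructor <;> lia
    rw [List.range_succ, List.countP_append, ih, List.countP_singleton]
    split_ifs with h <;> simp only [decide_eq_true_eq] at h <;> grind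

lemma List.length_le_mul_sum_count_div_add {α : Type*} [DecidableEq α] (S : List α) {k : ℕ}
    (hk : 0 < k) :
    S.length ≤ k * ∑ a ∈ S.toFinset, S.count a / k + k * S.toFinset.card := by
  rw [← List.sum_toFinset_count_eq_length, Finset.card_eq_sum_ones, Finset.mul_sum,
    Finset.mul_sum, ← Finset.sum_add_distrib]
  refine Finset.sum_le_sum fun a _ => ?_
  have := Nat.lt_mul_div_succ (S.count a) hk
  lia

/-- `chunkLabels k P S` renames the occurrence of `a` in `S` that is its `o`-th one in `P ++ S`
(counting from `0`) to `Nat.pair a (o / k)`, so consecutive runs of `k` occurrences of a symbol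
become one new symbol. -/
def chunkLabels (k : ℕ) : List ℕ → List ℕ → List ℕ
  | _, [] => []
  | P, a :: t => Nat.pair a (P.count a / k) :: chunkLabels k (P ++ [a]) t

section chunkLabels

variable (k : ℕ)

lemma chunkLabels_append (P l₁ l₂ : List ℕ) :
    chunkLabels k P (l₁ ++ l₂) = chunkLabels k P l₁ ++ chunkLabels k (P ++ l₁) l₂ := by
  induction l₁ generalizing P with
  | nil => simp [chunkLabels]
  | cons a t ih => simp [chunkLabels, ih (P ++ [a])]

lemma map_unpair_fst_chunkLabels (P S : List ℕ) :
    (chunkLabels k P S).map (·.unpair.1) = S := by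
  induction S generalizing P with
  | nil => rfl
  | cons a t ih => simp [chunkLabels, ih]

lemma filter_unpair_fst_chunkLabels (P S : List ℕ) (a : ℕ) :
    (chunkLabels k P S).filter (·.unpair.1 == a) =
      (List.range' (P.count a) (S.count a)).map (fun o => Nat.pair a (o / k)) := by
  induction S generalizing P with
  | nil => simp [chunkLabels]
  | cons b t ih =>
    by_cases hba : b = a
    · subst hba
      simp [chunkLabels, ih, List.range'_succ]
    · simp [chunkLabels, ih, hba]

lemma hasBlocks_chunkLabels {S : List ℕ} {m : ℕ} (h : HasBlocks S m) (P : List ℕ) :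
    HasBlocks (chunkLabels k P S) m := by
  obtain ⟨Bs, hlen, rfl, hnodup⟩ := h
  induction Bs generalizing P m with
  | nil => exact ⟨[], by simp, rfl, by simp⟩
  | cons B Bs ih =>
    obtain ⟨Cs, hClen, hCflat, hCnodup⟩ :=
      ih (P ++ B) (m := m - 1) (by simp at hlen; lia) fun C hC => hnodup C (by simp [hC])
    refine ⟨chunkLabels k P B :: Cs, by simp at hlen ⊢; lia, ?_, ?_⟩
    · rw [List.flatten_cons, chunkLabels_append, hCflat, List.flatten_cons]
    · refine List.forall_mem_cons.mpr ⟨?_, hCnodup⟩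
      refine List.Nodup.of_map (·.unpair.1) ?_
      rw [map_unpair_fst_chunkLabels]
      exact hnodup B (by simp)

/-- The labels given to the occurrences of one symbol never decrease. -/
lemma not_sublist_chunkLabels {x y : ℕ} (hxy : x ≠ y) (hfst : x.unpair.1 = y.unpair.1)
    (P S : List ℕ) : ¬ [x, y, x].Sublist (chunkLabels k P S) := by
  intro h
  have hsub := h.filter (·.unpair.1 == x.unpair.1)
  rw [filter_unpair_fst_chunkLabels] at hsub
  simp only [List.filter_cons, hfst, beq_self_eq_true, if_true, List.filter_nil] at hsub
  have hmono : ((List.range' (P.count y.unpair.1) (S.count y.unpair.1)).map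
      (fun o => Nat.pair y.unpair.1 (o / k))).Pairwise (·.unpair.2 ≤ ·.unpair.2) :=
    (List.pairwise_lt_range' (s := P.count y.unpair.1)).map _ fun u v huv => by
      simpa using Nat.div_le_div_right huv.le
  have hxyx := hmono.sublist hsub
  simp only [List.pairwise_cons, List.mem_cons, List.not_mem_nil] at hxyx
  have hxy₂ := hxyx.1 y (Or.inl rfl)
  have hyx₂ := hxyx.2.1 x (Or.inl rfl)
  apply hxy
  rw [← Nat.pair_unpair x, ← Nat.pair_unpair y, hfst, le_antisymm hxy₂ hyx₂]

end chunkLabels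

/-- Chunk labelling of `S` with the trailing incomplete chunk of every symbol deleted. -/
def chunkSeq (k : ℕ) (S : List ℕ) : List ℕ :=
  (chunkLabels k [] S).filter fun x => x.unpair.2 < S.count x.unpair.1 / k

section chunkSeq

variable {k : ℕ} {S : List ℕ}

lemma count_pair_chunkSeq {a j : ℕ} (hj : j < S.count a / k) :
    (chunkSeq k S).count (Nat.pair a j) = k := by
  have hk : 0 < k := Nat.pos_of_ne_zero fun h => by simp [h] at hj
  have hdiv : (j + 1) * k ≤ S.count a := (Nat.le_div_iff_mul_le hk).mp hj
  rw [chunkSeq, List.count_filter (by simpa using hj),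
    ← List.count_filter (p := (·.unpair.1 == a)) (by simp), filter_unpair_fst_chunkLabels,
    List.count_nil, ← List.range_eq_range', List.count_eq_countP, List.countP_map]
  simp only [Function.comp_def, beq_eq_decide, Nat.pair_eq_pair, true_and]
  rw [List.countP_range_div_eq hk]
  lia

lemma mem_chunkSeq {x : ℕ} : x ∈ chunkSeq k S ↔ x.unpair.2 < S.count x.unpair.1 / k := by
  refine ⟨fun hx => by simpa using List.of_mem_filter hx, fun hx => ?_⟩
  have hk : 0 < k := Nat.pos_of_ne_zero fun h => by simp [h] at hx
  rw [← List.count_pos_iff, ← Nat.pair_unpair x, count_pair_chunkSeq hx]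
  exact hk

lemma card_toFinset_chunkSeq :
    (chunkSeq k S).toFinset.card = ∑ a ∈ S.toFinset, S.count a / k := by
  trans (S.toFinset.sigma fun a => Finset.range (S.count a / k)).card
  swap
  · simp [Finset.card_sigma]
  refine Finset.card_nbij' (fun x => ⟨x.unpair.1, x.unpair.2⟩) (fun p => Nat.pair p.1 p.2)
    ?_ ?_ ?_ ?_
  · intro x hx
    have hx : x.unpair.2 < S.count x.unpair.1 / k := mem_chunkSeq.mp (by simpa using hx)
    have hpos : 0 < S.count x.unpair.1 := Nat.pos_of_ne_zero fun h => by simp [h] at hx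
    simp [← List.count_pos_iff, hpos, hx]
  · intro p hp
    simp only [Finset.coe_sigma, Set.mem_sigma_iff, Finset.mem_coe, Finset.mem_range] at hp
    simpa [mem_chunkSeq] using hp.2
  · intro x _
    simp
  · intro p _
    simp

lemma hasBlocks_chunkSeq {m : ℕ} (h : HasBlocks S m) : HasBlocks (chunkSeq k S) m :=
  (hasBlocks_chunkLabels k h []).filter _

lemma not_hasAlt_chunkSeq {s : ℕ} (hs : 1 ≤ s) (h : ¬ HasAlt S (s + 2)) :
    ¬ HasAlt (chunkSeq k S) (s + 2) := by
  rintro ⟨x, y, hxy, hsub⟩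
  replace hsub := hsub.trans List.filter_sublist
  by_cases hfst : x.unpair.1 = y.unpair.1
  · obtain ⟨d, rfl⟩ := Nat.exists_eq_add_of_le hs
    refine not_sublist_chunkLabels k hxy hfst [] S ((altList_sublist_add x y 3 d).trans ?_)
    rwa [show 1 + d + 2 = 3 + d by lia] at hsub
  · refine h ⟨_, _, hfst, ?_⟩
    simpa [altList_map, map_unpair_fst_chunkLabels] using hsub.map (·.unpair.1)

lemma isADS_chunkSeq {s m : ℕ} (hs : 1 ≤ s) (hS : ¬ HasAlt S (s + 2)) (hm : HasBlocks S m) :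
    IsADS s k m (chunkSeq k S) := by
  refine ⟨hasBlocks_chunkSeq hm, fun x hx => ?_, not_hasAlt_chunkSeq hs hS⟩
  rw [← Nat.pair_unpair x, count_pair_chunkSeq (mem_chunkSeq.mp hx)]

end chunkSeq

lemma natCast_sSup_le {A : Set ℕ} {B : ℕ∞} (h : ∀ L ∈ A, (L : ℕ∞) ≤ B) :
    ((sSup A : ℕ) : ℕ∞) ≤ B := by
  induction B using ENat.recTopCoe with
  | top => exact le_top
  | coe b => exact_mod_cast csSup_le' fun L hL => by exact_mod_cast h L hL

/-- For all positive `s, k, m, n`, `ψ_s(m,n) ≤ k·(N^s_k(m) + n)` in the extended naturals. -/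
theorem psi_le_NADS :
    ∀ s k m n : ℕ, 1 ≤ s → 1 ≤ k → 1 ≤ m → 1 ≤ n →
      (psiDS s m n : ℕ∞) ≤ (k : ℕ∞) * (NADS s k m + (n : ℕ∞)) := by
  intro s k m n hs hk _ _
  refine natCast_sSup_le ?_
  rintro _ ⟨S, hDS, hcard, hblocks, rfl⟩
  have hN : ((chunkSeq k S).toFinset.card : ℕ∞) ≤ NADS s k m :=
    le_sSup ⟨_, isADS_chunkSeq hs hDS.2 hblocks, rfl⟩
  rw [card_toFinset_chunkSeq] at hN
  calc (S.length : ℕ∞)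
      ≤ k * (∑ a ∈ S.toFinset, S.count a / k : ℕ) + k * S.toFinset.card := by
        exact_mod_cast S.length_le_mul_sum_count_div_add hk
    _ ≤ k * NADS s k m + k * n := by gcongr
    _ = k * (NADS s k m + n) := (mul_add _ _ _).symm
end

section
/- For all integers s ≥ 2 and m ≥ 2, N^s_{s+1}(m) ≤ C(m−2, s−1), the binomial coefficient (m−2 choose s−1). -/
/-!
Cut the sequence into blocks `B₀, …, B_{n-1}` of distinct symbols, `n ≤ m`. A symbol `a` lies
in at least `s + 1` blocks; if `e₀ < e₁ < ⋯ < e_s` are the first `s + 1` of them, send `a` to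
the `(s - 1)`-set `{e₁, …, e_{s-1}} ⊆ {1, …, m - 2}`. This map is injective: if `a ≠ b` share
these middle blocks `M`, then both symbols occur before `min M` and after `max M`. Taking them
before `min M` in the order `x y` in which they appear there, then alternately one from each
block of `M`, and finally whichever symbol comes next from a block after `max M`, spells an
alternation of length `2 + (s - 1) + 1 = s + 2`.
-/
namespace List

variable {α : Type*}

theorem pair_sublist_or_of_ne {a b : α} {l : List α} (hab : a ≠ b) (ha : a ∈ l) (hb : b ∈ l) :
    [a, b] <+ l ∨ [b, a] <+ l := by
  obtain ⟨l', hperm, hsub⟩ :=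
    subperm_of_subset (l₁ := [a, b]) (l₂ := l) (by simpa using hab) (by simp [ha, hb])
  rcases perm_pair.1 hperm with rfl | rfl
  · exact .inl hsub
  · exact .inr hsub

theorem lt_length_of_mem_getD {x : α} {L : List (List α)} {i : ℕ} (h : x ∈ L.getD i []) :
    i < L.length := by
  by_contra hi
  simp [getElem?_eq_none (not_lt.1 hi)] at h

theorem map_getD_range_length (l : List α) (d : α) : (range l.length).map (l.getD · d) = l := by
  apply ext_getElem <;> simp +contextual

theorem map_getD_sublist {l : List α} {J : List ℕ} (hJ : J.Pairwise (· < ·))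
    (hlt : ∀ j ∈ J, j < l.length) (d : α) : J.map (l.getD · d) <+ l := by
  have hsub : J <+ range l.length :=
    sublist_of_subperm_of_pairwise
      (subperm_of_subset hJ.nodup fun j hj => mem_range.2 (hlt j hj)) hJ pairwise_lt_range
  simpa only [map_getD_range_length] using hsub.map (l.getD · d)

theorem map_getD_range_append_range'_sublist {l : List α} {M : List ℕ} {c e : ℕ} (d : α)
    (hM : M.Pairwise (· < ·)) (hce : c ≤ e) (hMce : ∀ j ∈ M, c ≤ j ∧ j < e)
    (he : e ≤ l.length) :
    (range c).map (l.getD · d) ++ M.map (l.getD · d) ++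
      (range' e (l.length - e)).map (l.getD · d) <+ l := by
  have hJ : (range c ++ M ++ range' e (l.length - e)).Pairwise (· < ·) := by
    refine pairwise_append.2 ⟨pairwise_append.2 ⟨pairwise_lt_range, hM, ?_⟩,
      pairwise_lt_range' .., ?_⟩
    · intro i hi j hj
      exact (mem_range.1 hi).trans_le (hMce j hj).1
    · simp only [mem_append, mem_range, mem_range'_1]
      rintro i (hi | hi) j hj
      · omega
      · have := (hMce i hi).2
        omega
  simpa using map_getD_sublist hJ (by
    simp only [mem_append, mem_range, mem_range'_1]
    rintro j ((hj | hj) | hj)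
    · omega
    · have := (hMce j hj).2
      omega
    · omega) d

theorem count_flatten_of_forall_nodup [DecidableEq α] {L : List (List α)}
    (hL : ∀ B ∈ L, B.Nodup) (a : α) : L.flatten.count a = L.countP (a ∈ ·) := by
  induction L with
  | nil => rfl
  | cons B L ih =>
    rw [flatten_cons, count_append, ih fun C hC => hL C (mem_cons_of_mem _ hC),
      (hL B mem_cons_self).count, countP_cons]
    split_ifs <;> simp_all [Nat.add_comm]

theorem exists_eq_cons_take_tail_append_cons {l : List α} {k : ℕ}
    (h : k + 2 ≤ l.length) : ∃ p q r, l = p :: (l.tail.take k ++ q :: r) := by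
  obtain _ | ⟨p, t⟩ := l
  · simp at h
  · rcases hdrop : t.drop k with _ | ⟨q, r⟩
    · simp at hdrop h
      omega
    · exact ⟨p, q, r, by rw [tail_cons, ← hdrop, take_append_drop]⟩

end List

open scoped List

theorem altList_sublist_flatten_append {R : List ℕ} :
    ∀ {Ds : List (List ℕ)} {x y : ℕ}, (∀ D ∈ Ds, x ∈ D ∧ y ∈ D) → x ∈ R → y ∈ R →
      altList x y (Ds.length + 1) <+ Ds.flatten ++ R
  | [], x, _, _, hx, _ => by simpa [altList] using hx
  | D :: Ds, x, y, hDs, hx, hy => by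
    have hxD : [x] <+ D := List.singleton_sublist.2 (hDs D List.mem_cons_self).1
    have htail := altList_sublist_flatten_append (Ds := Ds)
      (fun E hE => (hDs E (List.mem_cons_of_mem _ hE)).symm) hy hx
    simpa [altList] using hxD.append htail

theorem altList_add_three_sublist {P R : List ℕ} {Ds : List (List ℕ)} {x y : ℕ}
    (hP : [x, y] <+ P) (hDs : ∀ D ∈ Ds, x ∈ D ∧ y ∈ D) (hx : x ∈ R) (hy : y ∈ R) :
    altList x y (Ds.length + 3) <+ P ++ (Ds.flatten ++ R) := by
  simpa [altList] using hP.append (altList_sublist_flatten_append hDs hx hy)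

theorem hasAlt_of_shared_blocks {Bs : List (List ℕ)} {M : List ℕ} {a b c d : ℕ} (hab : a ≠ b)
    (hM : M.Pairwise (· < ·)) (hcd : c ≤ d) (hMcd : ∀ j ∈ M, c ≤ j ∧ j < d)
    (hpre : ∀ x ∈ [a, b], ∃ i < c, x ∈ Bs.getD i [])
    (hmid : ∀ j ∈ M, a ∈ Bs.getD j [] ∧ b ∈ Bs.getD j [])
    (hsuf : ∀ x ∈ [a, b], ∃ i, d ≤ i ∧ x ∈ Bs.getD i []) :
    HasAlt Bs.flatten (M.length + 3) := by
  set f : ℕ → List ℕ := (Bs.getD · [])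
  set P := ((List.range c).map f).flatten
  set R := ((List.range' d (Bs.length - d)).map f).flatten
  have hd : d ≤ Bs.length := by
    obtain ⟨i, hi, ha⟩ := hsuf a (by simp)
    exact hi.trans (List.lt_length_of_mem_getD ha).le
  have hsub : P ++ ((M.map f).flatten ++ R) <+ Bs.flatten := by
    simpa [P, R, f] using (List.map_getD_range_append_range'_sublist [] hM hcd hMcd hd).flatten
  have hP : ∀ x ∈ [a, b], x ∈ P := by
    intro x hx
    obtain ⟨i, hi, hxi⟩ := hpre x hx
    exact List.mem_flatten.2 ⟨f i, List.mem_map.2 ⟨i, List.mem_range.2 hi, rfl⟩, hxi⟩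
  have hR : ∀ x ∈ [a, b], x ∈ R := by
    intro x hx
    obtain ⟨i, hi, hxi⟩ := hsuf x hx
    refine List.mem_flatten.2 ⟨f i, List.mem_map.2 ⟨i, ?_, rfl⟩, hxi⟩
    have := List.lt_length_of_mem_getD hxi
    simp only [List.mem_range'_1]
    omega
  have hMf : ∀ D ∈ M.map f, a ∈ D ∧ b ∈ D := List.forall_mem_map.2 hmid
  rcases List.pair_sublist_or_of_ne hab (hP a (by simp)) (hP b (by simp)) with h | h
  · refine ⟨a, b, hab, ?_⟩
    simpa using (altList_add_three_sublist h hMf (hR a (by simp)) (hR b (by simp))).trans hsub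
  · refine ⟨b, a, hab.symm, ?_⟩
    simpa using (altList_add_three_sublist h (fun D hD => (hMf D hD).symm) (hR b (by simp))
      (hR a (by simp))).trans hsub

section BlockIndices

variable {Bs : List (List ℕ)} {a : ℕ}

def blockIndices (Bs : List (List ℕ)) (a : ℕ) : List ℕ := Bs.findIdxs (a ∈ ·)

def middleBlocks (k : ℕ) (Bs : List (List ℕ)) (a : ℕ) : List ℕ :=
  (blockIndices Bs a).tail.take k

theorem mem_blockIndices {j : ℕ} : j ∈ blockIndices Bs a ↔ a ∈ Bs.getD j [] := by
  rw [blockIndices, List.mem_findIdxs_iff_exists_getElem_pos]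
  constructor
  · rintro ⟨hj, h⟩
    simpa [List.getElem?_eq_getElem hj] using h
  · intro h
    have hj := List.lt_length_of_mem_getD h
    exact ⟨hj, by simpa [List.getElem?_eq_getElem hj] using h⟩

theorem pairwise_blockIndices : (blockIndices Bs a).Pairwise (· < ·) := List.pairwise_findIdxs

theorem length_blockIndices (hBs : ∀ B ∈ Bs, B.Nodup) :
    (blockIndices Bs a).length = Bs.flatten.count a := by
  simp [blockIndices, List.count_flatten_of_forall_nodup hBs]

theorem mem_getD_of_mem_middleBlocks {k j : ℕ} (hj : j ∈ middleBlocks k Bs a) :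
    a ∈ Bs.getD j [] :=
  mem_blockIndices.1 (List.mem_of_mem_tail (List.mem_of_mem_take hj))

theorem pairwise_middleBlocks {k : ℕ} : (middleBlocks k Bs a).Pairwise (· < ·) :=
  pairwise_blockIndices.sublist ((List.take_sublist _ _).trans (List.tail_sublist _))

theorem exists_bounds_middleBlocks {k : ℕ} (h : k + 2 ≤ (blockIndices Bs a).length) :
    ∃ p q, a ∈ Bs.getD p [] ∧ a ∈ Bs.getD q [] ∧
      (∀ j ∈ middleBlocks k Bs a, p < j ∧ j < q) ∧ (middleBlocks k Bs a).length = k := by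
  obtain ⟨p, q, r, he⟩ := List.exists_eq_cons_take_tail_append_cons h
  have hsorted := he ▸ pairwise_blockIndices (Bs := Bs) (a := a)
  simp only [List.pairwise_cons, List.pairwise_append, List.mem_append, List.mem_cons] at hsorted
  refine ⟨p, q, mem_blockIndices.1 (by rw [he]; simp), mem_blockIndices.1 (by rw [he]; simp),
    fun j hj => ⟨hsorted.1 j (.inl hj), hsorted.2.2.2 j hj q (.inl rfl)⟩, ?_⟩
  simp [middleBlocks]
  omega

theorem hasAlt_of_middleBlocks_eq {k b : ℕ} (hk : 1 ≤ k) (hab : a ≠ b)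
    (ha : k + 2 ≤ (blockIndices Bs a).length) (hb : k + 2 ≤ (blockIndices Bs b).length)
    (hM : middleBlocks k Bs a = middleBlocks k Bs b) : HasAlt Bs.flatten (k + 3) := by
  obtain ⟨p, q, hp, hq, hpq, hlen⟩ := exists_bounds_middleBlocks ha
  obtain ⟨p', q', hp', hq', hpq', -⟩ := exists_bounds_middleBlocks hb
  rw [← hM] at hpq'
  obtain ⟨j, hj⟩ := List.exists_mem_of_length_pos (by omega : 0 < (middleBlocks k Bs a).length)
  have halt := hasAlt_of_shared_blocks hab pairwise_middleBlocks (c := max p p' + 1)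
    (d := min q q') (by have := hpq j hj; have := hpq' j hj; omega)
    (fun j hj => by have := hpq j hj; have := hpq' j hj; omega)
    (by simpa using ⟨⟨p, by omega, hp⟩, ⟨p', by omega, hp'⟩⟩)
    (fun j hj => ⟨mem_getD_of_mem_middleBlocks hj, mem_getD_of_mem_middleBlocks (hM ▸ hj)⟩)
    (by simpa using ⟨⟨q, by omega, hq⟩, ⟨q', by omega, hq'⟩⟩)
  rwa [hlen] at halt

end BlockIndices

theorem card_toFinset_flatten_le_choose {s m : ℕ} (hs : 2 ≤ s) {Bs : List (List ℕ)}
    (hlen : Bs.length ≤ m) (hBs : ∀ B ∈ Bs, B.Nodup)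
    (hcount : ∀ a ∈ Bs.flatten, s + 1 ≤ Bs.flatten.count a)
    (hfree : ¬ HasAlt Bs.flatten (s + 2)) :
    Bs.flatten.toFinset.card ≤ (m - 2).choose (s - 1) := by
  have hidx : ∀ a ∈ Bs.flatten.toFinset, s - 1 + 2 ≤ (blockIndices Bs a).length := by
    intro a ha
    have := hcount a (List.mem_toFinset.1 ha)
    rw [length_blockIndices hBs]
    omega
  have hmaps : Set.MapsTo (fun a => (middleBlocks (s - 1) Bs a).toFinset) Bs.flatten.toFinset
      (Finset.powersetCard (s - 1) (Finset.Icc 1 (m - 2))) := by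
    intro a ha
    obtain ⟨p, q, -, hq, hpq, hlen'⟩ := exists_bounds_middleBlocks (hidx a ha)
    have hqm := (List.lt_length_of_mem_getD hq).trans_le hlen
    rw [Finset.mem_coe, Finset.mem_powersetCard]
    refine ⟨fun j hj => ?_, ?_⟩
    · have := hpq j (List.mem_toFinset.1 hj)
      rw [Finset.mem_Icc]
      omega
    · rw [List.toFinset_card_of_nodup pairwise_middleBlocks.nodup, hlen']
  have hinj : Set.InjOn (fun a => (middleBlocks (s - 1) Bs a).toFinset) Bs.flatten.toFinset := by
    intro a ha b hb heq
    by_contra hab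
    have hM : middleBlocks (s - 1) Bs a = middleBlocks (s - 1) Bs b :=
      (List.perm_of_nodup_nodup_toFinset_eq pairwise_middleBlocks.nodup
        pairwise_middleBlocks.nodup heq).eq_of_pairwise' pairwise_middleBlocks pairwise_middleBlocks
    have halt := hasAlt_of_middleBlocks_eq (by omega) hab (hidx a ha) (hidx b hb) hM
    rw [show s - 1 + 3 = s + 2 by omega] at halt
    exact hfree halt
  calc Bs.flatten.toFinset.card
      ≤ (Finset.powersetCard (s - 1) (Finset.Icc 1 (m - 2))).card :=
        Finset.card_le_card_of_injOn _ hmaps hinj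
    _ = (m - 2).choose (s - 1) := by simp

/-- For all `s ≥ 2` and `m ≥ 2`, `N^s_{s+1}(m) ≤ (m−2 choose s−1)`. -/
theorem NADS_succ_upper :
    ∀ s m : ℕ, 2 ≤ s → 2 ≤ m →
      NADS s (s + 1) m ≤ ((Nat.choose (m - 2) (s - 1) : ℕ) : ℕ∞) := by
  intro s m hs _
  refine sSup_le ?_
  rintro _ ⟨S, ⟨⟨Bs, hlen, rfl, hBs⟩, hcount, hfree⟩, rfl⟩
  exact_mod_cast card_toFinset_flatten_le_choose hs hlen hBs hcount hfree
end

section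
/- There exists an absolute constant c such that for every integer k ≥ 2 and every integer m ≥ 1, N^3_{2k+1}(m) ≤ c·m·α_k(m). -/
/-!
Only the occurrence sets of the symbols matter: disjoint sets of positions, each of size at
least `μ = 2k + 1`, meeting every block at most once, no two of them forming `a b a b a`.
Cutting the `m` blocks into `p` runs of `t` consecutive blocks gives
`F_μ(m) ≤ p F_μ(t) + F_{μ-2}(p) + 3m`: sets inside one run are counted run by run; a set with
two positions in a run it straddles, or three in a run it leaves, is determined by the block of
its second position there; and every other set, stripped of its first and last position, has
its remaining positions in distinct runs, so one position per run gives a family of the same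
kind over `p` blocks with `μ - 2`. For `μ = 5` two runs give `O(m log m)`. For larger `μ`,
runs of `t = A_{k-1}(α_{k-1}(α_{k-1}(m)) + 8)` blocks make the contracted term `O(m)` by
induction on `k` while the local term recurses; the recursion `w ↦ α_{k-1}(w) + 8` on
`w = α_{k-1}(m)` has depth at most `2 α_k(m) + 2`.
-/

open Finset

/-! ### The Ackermann hierarchy -/

theorem Ak_add_two_zero (j : ℕ) : Ak (j + 2) 0 = 1 := rfl

theorem Ak_add_two_succ (j n : ℕ) : Ak (j + 2) (n + 1) = Ak (j + 1) (Ak (j + 2) n) :=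
  Function.iterate_succ_apply' _ _ _

theorem Ak_succ_one : ∀ j, Ak (j + 1) 1 = 2
  | 0 => rfl
  | j + 1 => by rw [Ak_add_two_succ, Ak_add_two_zero, Ak_succ_one j]

theorem Ak_two (n : ℕ) : Ak 2 n = 2 ^ n := by
  induction n with
  | zero => rfl
  | succ n ih => rw [Ak_add_two_succ, ih, pow_succ, mul_comm]; rfl

theorem two_mul_le_Ak : ∀ j n, 2 * n ≤ Ak (j + 1) n
  | 0, _ => le_rfl
  | _ + 1, 0 => Nat.zero_le _
  | j + 1, 1 => (Ak_succ_one (j + 1)).ge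
  | j + 1, n + 2 => show 2 * (n + 2) ≤ Ak (j + 2) (n + 2) by
    have : 2 * (n + 1) ≤ Ak (j + 2) (n + 1) := two_mul_le_Ak (j + 1) (n + 1)
    have := two_mul_le_Ak j (Ak (j + 2) (n + 1))
    rw [Ak_add_two_succ]
    omega

theorem lt_Ak_add_two (j n : ℕ) : n < Ak (j + 2) n := by
  rcases n with _ | n
  · simp [Ak_add_two_zero]
  · have : 2 * (n + 1) ≤ Ak (j + 2) (n + 1) := two_mul_le_Ak (j + 1) (n + 1)
    omega

theorem le_Ak : ∀ j n, n ≤ Ak j n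
  | 0, n => n.le_succ
  | j + 1, n => by have := two_mul_le_Ak j n; omega

theorem Ak_mono : ∀ j, Monotone (Ak j)
  | 0 => fun _ _ h => Nat.succ_le_succ h
  | 1 => fun _ _ h => Nat.mul_le_mul_left 2 h
  | j + 2 => monotone_nat_of_le_succ fun n => by rw [Ak_add_two_succ]; exact le_Ak _ _

theorem two_pow_mul_le_Ak_add (j n d : ℕ) : 2 ^ d * Ak (j + 2) n ≤ Ak (j + 2) (n + d) := by
  induction d with
  | zero => simp
  | succ d ih =>
    calc 2 ^ (d + 1) * Ak (j + 2) n = 2 * (2 ^ d * Ak (j + 2) n) := by ring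
      _ ≤ 2 * Ak (j + 2) (n + d) := Nat.mul_le_mul_left 2 ih
      _ ≤ Ak (j + 2) (n + d + 1) := by rw [Ak_add_two_succ]; exact two_mul_le_Ak _ _

theorem Ak_add_two_le_Ak_add_three (j n : ℕ) : Ak (j + 2) n ≤ Ak (j + 3) n := by
  rcases n with _ | n
  · rfl
  · rw [Ak_add_two_succ (j + 1)]
    exact Ak_mono _ (lt_Ak_add_two (j + 1) n)

theorem Ak_le_Ak_of_le {j j' : ℕ} (hj : 2 ≤ j) (hjj' : j ≤ j') (n : ℕ) : Ak j n ≤ Ak j' n := by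
  induction j', hjj' using Nat.le_induction with
  | base => rfl
  | succ j' hj' ih =>
    obtain ⟨i, rfl⟩ := Nat.exists_eq_add_of_le' (hj.trans hj')
    exact ih.trans (Ak_add_two_le_Ak_add_three i n)

theorem le_Ak_invAk (j m : ℕ) : m ≤ Ak j (invAk j m) :=
  Nat.sInf_mem (s := {n | m ≤ Ak j n}) ⟨m, le_Ak j m⟩

theorem invAk_le_iff {j m n : ℕ} : invAk j m ≤ n ↔ m ≤ Ak j n :=
  ⟨fun h => (le_Ak_invAk j m).trans (Ak_mono j h), fun h => Nat.sInf_le h⟩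

theorem Ak_lt_of_lt_invAk {j m n : ℕ} (h : n < invAk j m) : Ak j n < m :=
  lt_of_not_ge (mt invAk_le_iff.2 (not_le.2 h))

theorem invAk_mono (j : ℕ) : Monotone (invAk j) := fun _ _ h =>
  invAk_le_iff.2 (h.trans (le_Ak_invAk _ _))

theorem invAk_Ak_le (j n : ℕ) : invAk j (Ak j n) ≤ n := invAk_le_iff.2 le_rfl

theorem invAk_le_self (j m : ℕ) : invAk j m ≤ m := invAk_le_iff.2 (le_Ak j m)

theorem invAk_two_le_iff {m n : ℕ} : invAk 2 m ≤ n ↔ m ≤ 2 ^ n := by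
  rw [invAk_le_iff, Ak_two]

theorem invAk_le_invAk_two {j : ℕ} (hj : 2 ≤ j) (m : ℕ) : invAk j m ≤ invAk 2 m :=
  invAk_le_iff.2 ((le_Ak_invAk 2 m).trans (Ak_le_Ak_of_le le_rfl hj _))

theorem invAk_add_three {j x : ℕ} (hx : 2 ≤ x) :
    invAk (j + 3) x = invAk (j + 3) (invAk (j + 2) x) + 1 := by
  have key : ∀ n, invAk (j + 3) x ≤ n + 1 ↔ invAk (j + 3) (invAk (j + 2) x) ≤ n := fun n => by
    rw [invAk_le_iff, invAk_le_iff, Ak_add_two_succ (j + 1), invAk_le_iff]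
  have hpos : invAk (j + 3) x ≠ 0 := fun h => by
    have := h ▸ le_Ak_invAk (j + 3) x
    rw [Ak_add_two_zero] at this
    omega
  have h₁ := (key (invAk (j + 3) x - 1)).1 (by omega)
  have h₂ := (key _).2 le_rfl
  omega

theorem four_mul_add_four_le_two_pow {d : ℕ} (hd : 5 ≤ d) : 4 * d + 4 ≤ 2 ^ d := by
  induction d, hd using Nat.le_induction with
  | base => norm_num
  | succ d _ ih => rw [pow_succ]; omega

theorem invAk_add_eight_le_half {j w : ℕ} (hj : 2 ≤ j) (hw : 1025 ≤ w) :
    invAk j w + 8 ≤ w / 2 := by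
  have : invAk 2 w ≤ w / 4 :=
    invAk_two_le_iff.2 (by have := four_mul_add_four_le_two_pow (d := w / 4) (by omega); omega)
  have := invAk_le_invAk_two hj w
  omega

/-- The number of steps `w ↦ α_j(w) + 8` down to `1024`; the `min` with `w / 2` only makes the
recursion well founded and is inactive for `2 ≤ j` (`cascadeDepth_of_lt`). -/
noncomputable def cascadeDepth (j w : ℕ) : ℕ :=
  if h : w ≤ 1024 then 0 else cascadeDepth j (min (invAk j w + 8) (w / 2)) + 1
termination_by w
decreasing_by omega

theorem cascadeDepth_of_le {j w : ℕ} (h : w ≤ 1024) : cascadeDepth j w = 0 := by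
  rw [cascadeDepth, dif_pos h]

theorem cascadeDepth_of_lt {j w : ℕ} (hj : 2 ≤ j) (h : 1024 < w) :
    cascadeDepth j w = cascadeDepth j (invAk j w + 8) + 1 := by
  rw [cascadeDepth, dif_neg h.not_ge, min_eq_left (invAk_add_eight_le_half hj h)]

theorem cascadeDepth_le_self (j w : ℕ) : cascadeDepth j w ≤ w := by
  induction w using Nat.strong_induction_on with
  | _ w ih =>
    rw [cascadeDepth]
    split_ifs with h
    · exact Nat.zero_le _
    · have := min_le_right (invAk j w + 8) (w / 2)
      have := ih _ (show min (invAk j w + 8) (w / 2) < w by omega)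
      omega

theorem cascadeDepth_mono {j : ℕ} (hj : 2 ≤ j) : Monotone (cascadeDepth j) := by
  intro u v huv
  induction v using Nat.strong_induction_on generalizing u with
  | _ v ih =>
    by_cases hu : u ≤ 1024
    · rw [cascadeDepth_of_le hu]; exact Nat.zero_le _
    · have hv := invAk_add_eight_le_half hj (show 1025 ≤ v by omega)
      rw [cascadeDepth_of_lt (w := u) hj (by omega), cascadeDepth_of_lt (w := v) hj (by omega)]
      exact Nat.succ_le_succ (ih (invAk j v + 8) (by omega) (by gcongr; exact invAk_mono j huv))

/-- Two steps of the cascade lower `α_{j+1}` by one: the second step lands below `α_j(w)`, and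
`α_{j+1}(w) = α_{j+1}(α_j(w)) + 1`. -/
theorem cascadeDepth_le {j : ℕ} (hj : 2 ≤ j) (w : ℕ) :
    cascadeDepth j w ≤ 2 * invAk (j + 1) w + 2 := by
  obtain ⟨i, rfl⟩ := Nat.exists_eq_add_of_le' hj
  show cascadeDepth (i + 2) w ≤ 2 * invAk (i + 3) w + 2
  induction w using Nat.strong_induction_on with
  | _ w ih =>
    by_cases hw : w ≤ 1024
    · rw [cascadeDepth_of_le hw]; exact Nat.zero_le _
    have hy := invAk_add_eight_le_half hj (show 1025 ≤ w by omega)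
    rw [cascadeDepth_of_lt hj (by omega)]
    by_cases hy' : invAk (i + 2) w + 8 ≤ 1024
    · rw [cascadeDepth_of_le hy']; omega
    have hz := invAk_add_eight_le_half hj (show 1025 ≤ invAk (i + 2) w + 8 by omega)
    rw [cascadeDepth_of_lt hj (by omega)]
    have h₁ := ih _ (show invAk (i + 2) (invAk (i + 2) w + 8) + 8 < w by omega)
    have h₂ := invAk_mono (i + 3)
      (show invAk (i + 2) (invAk (i + 2) w + 8) + 8 ≤ invAk (i + 2) w by omega)
    have h₃ := invAk_add_three (j := i) (show 2 ≤ w by omega)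
    omega

/-! ### Families of occurrence sets -/

def Ababa (A B : Finset ℕ) : Prop :=
  ∃ x₁ ∈ A, ∃ y₁ ∈ B, ∃ x₂ ∈ A, ∃ y₂ ∈ B, ∃ x₃ ∈ A, x₁ < y₁ ∧ y₁ < x₂ ∧ x₂ < y₂ ∧ y₂ < x₃

theorem Ababa.mono {A B A' B' : Finset ℕ} (hA : A ⊆ A') (hB : B ⊆ B') (h : Ababa A B) :
    Ababa A' B' :=
  let ⟨x₁, h₁, y₁, h₂, x₂, h₃, y₂, h₄, x₃, h₅, hlt⟩ := h
  ⟨x₁, hA h₁, y₁, hB h₂, x₂, hA h₃, y₂, hB h₄, x₃, hA h₅, hlt⟩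

/-- Abstraction of an `ADS^3_μ(m)`-sequence: `F` holds the sets of positions of its symbols and
`β` sends a position to the index of its block. -/
structure BlockFamily (μ m : ℕ) (F : Finset (Finset ℕ)) (β : ℕ → ℕ) : Prop where
  le_card : ∀ A ∈ F, μ ≤ #A
  lt_of_mem : ∀ A ∈ F, ∀ x ∈ A, β x < m
  monotone : Monotone β
  injOn : ∀ A ∈ F, Set.InjOn β A
  pairwiseDisjoint : (F : Set (Finset ℕ)).PairwiseDisjoint id
  not_ababa : ∀ A ∈ F, ∀ B ∈ F, A ≠ B → ¬ Ababa A B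

def FamilyBound (μ m L : ℕ) : Prop :=
  ∀ F β, BlockFamily μ m F β → #F ≤ L

namespace BlockFamily

variable {μ m t : ℕ} {F : Finset (Finset ℕ)} {β : ℕ → ℕ} {A B : Finset ℕ}

theorem mono_left {μ' : ℕ} (h : BlockFamily μ m F β) (hμ : μ' ≤ μ) : BlockFamily μ' m F β :=
  { h with le_card := fun A hA => hμ.trans (h.le_card A hA) }

theorem notMem_of_mem (h : BlockFamily μ m F β) (hA : A ∈ F) (hB : B ∈ F) (hAB : A ≠ B)
    {x : ℕ} (hx : x ∈ A) : x ∉ B :=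
  disjoint_left.1 (h.pairwiseDisjoint hA hB hAB) hx

theorem block_lt_block (h : BlockFamily μ m F β) (hA : A ∈ F) {x y : ℕ} (hx : x ∈ A) (hy : y ∈ A)
    (hxy : x < y) : β x < β y :=
  (h.monotone hxy.le).lt_of_ne fun e => hxy.ne (h.injOn A hA hx hy e)

theorem nonempty (h : BlockFamily μ m F β) (hμ : 0 < μ) (hA : A ∈ F) : A.Nonempty :=
  card_pos.1 (hμ.trans_le (h.le_card A hA))

theorem eq_empty_of_lt (h : BlockFamily μ m F β) (hm : m < μ) : F = ∅ := by
  refine eq_empty_of_forall_notMem fun A hA => ?_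
  have : #(A.image β) ≤ #(range m) :=
    card_le_card fun b hb => by
      obtain ⟨x, hx, rfl⟩ := mem_image.1 hb
      exact mem_range.2 (h.lt_of_mem A hA x hx)
  rw [card_image_of_injOn (h.injOn A hA), card_range] at this
  exact absurd (h.le_card A hA) (by omega)

end BlockFamily

theorem FamilyBound.mono_right {μ m L L' : ℕ} (h : FamilyBound μ m L) (hL : L ≤ L') :
    FamilyBound μ m L' :=
  fun F β hF => (h F β hF).trans hL

theorem familyBound_zero_of_lt {μ m : ℕ} (hm : m < μ) : FamilyBound μ m 0 :=
  fun _ _ hF => (hF.eq_empty_of_lt hm).symm ▸ le_rfl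

/-! ### Splitting the blocks into runs -/

def slice (β : ℕ → ℕ) (t : ℕ) (A : Finset ℕ) (j : ℕ) : Finset ℕ := {x ∈ A | β x / t = j}

def MeetsBefore (β : ℕ → ℕ) (t : ℕ) (A : Finset ℕ) (j : ℕ) : Prop := ∃ u ∈ A, β u / t < j

def MeetsAfter (β : ℕ → ℕ) (t : ℕ) (A : Finset ℕ) (j : ℕ) : Prop := ∃ v ∈ A, j < β v / t

theorem Monotone.nat_div {β : ℕ → ℕ} (hβ : Monotone β) (t : ℕ) : Monotone (β · / t) :=
  fun _ _ hxy => Nat.div_le_div_right (hβ hxy)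

theorem lt_of_mem_slice_of_lt {β : ℕ → ℕ} (hβ : Monotone β) {t j u x : ℕ} {A : Finset ℕ}
    (hu : β u / t < j) (hx : x ∈ slice β t A j) : u < x :=
  (hβ.nat_div t).reflect_lt ((mem_filter.1 hx).2 ▸ hu)

theorem lt_of_mem_slice_of_gt {β : ℕ → ℕ} (hβ : Monotone β) {t j v x : ℕ} {A : Finset ℕ}
    (hv : j < β v / t) (hx : x ∈ slice β t A j) : x < v :=
  (hβ.nat_div t).reflect_lt ((mem_filter.1 hx).2 ▸ hv)

theorem mem_of_mem_slice {β : ℕ → ℕ} {t j x : ℕ} {A : Finset ℕ} (hx : x ∈ slice β t A j) :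
    x ∈ A :=
  (mem_filter.1 hx).1

noncomputable def second (s : Finset ℕ) : ℕ := Nat.nth (· ∈ s) 1

theorem nth_mem_finset {s : Finset ℕ} {n : ℕ} (h : n < #s) : Nat.nth (· ∈ s) n ∈ s :=
  Nat.nth_mem n fun hf => by convert h; ext; simp

theorem nth_lt_nth_finset {s : Finset ℕ} {n n' : ℕ} (hn : n < n') (h : n' < #s) :
    Nat.nth (· ∈ s) n < Nat.nth (· ∈ s) n' :=
  Nat.nth_lt_nth' hn fun hf => by convert h; ext; simp

theorem second_mem {s : Finset ℕ} (h : 2 ≤ #s) : second s ∈ s := nth_mem_finset h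

theorem exists_lt_second {s : Finset ℕ} (h : 2 ≤ #s) : ∃ x ∈ s, x < second s :=
  ⟨_, nth_mem_finset (by omega), nth_lt_nth_finset zero_lt_one h⟩

theorem exists_second_lt {s : Finset ℕ} (h : 3 ≤ #s) : ∃ x ∈ s, second s < x :=
  ⟨_, nth_mem_finset h, nth_lt_nth_finset one_lt_two h⟩

namespace BlockFamily

variable {μ m t : ℕ} {F : Finset (Finset ℕ)} {β : ℕ → ℕ}

open scoped Classical in
/-- Each set singled out by `Q` at a run is charged to the block of its second position there. -/
theorem card_filter_exists_le (h : BlockFamily μ m F β) {Q : Finset ℕ → ℕ → Prop}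
    (hQ : ∀ A j, Q A j → 2 ≤ #(slice β t A j))
    (hsep : ∀ A ∈ F, ∀ B ∈ F, A ≠ B → ∀ j, Q A j → Q B j →
      second (slice β t A j) < second (slice β t B j) →
      β (second (slice β t A j)) ≠ β (second (slice β t B j))) :
    #{A ∈ F | ∃ j, Q A j} ≤ m := by
  have hex : ∀ A ∈ {A ∈ F | ∃ j, Q A j}, ∃ j, Q A j := fun A hA => (mem_filter.1 hA).2
  choose! J hJ using hex
  have hmem : ∀ A ∈ {A ∈ F | ∃ j, Q A j}, second (slice β t A (J A)) ∈ slice β t A (J A) :=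
    fun A hA => second_mem (hQ _ _ (hJ A hA))
  calc #{A ∈ F | ∃ j, Q A j} ≤ #(range m) :=
        card_le_card_of_injOn (fun A => β (second (slice β t A (J A)))) ?_ ?_
    _ = m := card_range m
  · intro A hA
    exact mem_range.2 (h.lt_of_mem A (mem_filter.1 hA).1 _ (mem_filter.1 (hmem A hA)).1)
  · intro A hA B hB hAB
    by_contra hne
    have hAF := (mem_filter.1 (mem_coe.1 hA)).1
    have hBF := (mem_filter.1 (mem_coe.1 hB)).1
    have hsA := mem_filter.1 (hmem A hA)
    have hsB := mem_filter.1 (hmem B hB)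
    have hJAB : J A = J B := by rw [← hsA.2, ← hsB.2]; exact congrArg (· / t) hAB
    have hQB := hJ B hB
    simp only at hAB
    rw [← hJAB] at hsB hQB hAB
    have hne' : second (slice β t A (J A)) ≠ second (slice β t B (J A)) := fun e =>
      h.notMem_of_mem hAF hBF hne hsA.1 (e ▸ hsB.1)
    rcases lt_or_gt_of_ne hne' with hlt | hlt
    · exact hsep A hAF B hBF hne _ (hJ A hA) hQB hlt hAB
    · exact hsep B hBF A hAF (Ne.symm hne) _ hQB (hJ A hA) hlt hAB.symm

theorem lt_of_lt_of_block_eq (h : BlockFamily μ m F β) {B : Finset ℕ} (hB : B ∈ F) {a b y : ℕ}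
    (hy : y ∈ B) (hb : b ∈ B) (hyb : y < b) (hab : β a = β b) : y < a :=
  h.monotone.reflect_lt (hab ▸ h.block_lt_block hB hy hb hyb)

theorem lt_of_block_eq_of_lt (h : BlockFamily μ m F β) {A : Finset ℕ} (hA : A ∈ F) {a b x : ℕ}
    (ha : a ∈ A) (hx : x ∈ A) (hax : a < x) (hab : β a = β b) : b < x :=
  h.monotone.reflect_lt (hab ▸ h.block_lt_block hA ha hx hax)

open scoped Classical in
theorem card_filter_straddling_le (h : BlockFamily μ m F β) :
    #{A ∈ F | ∃ j, 2 ≤ #(slice β t A j) ∧ MeetsBefore β t A j ∧ MeetsAfter β t A j} ≤ m := by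
  refine h.card_filter_exists_le (fun A j hQ => hQ.1) ?_
  rintro A hA B hB hAB j ⟨hA2, ⟨uA, huA, huA'⟩, vA, hvA, hvA'⟩ ⟨hB2, ⟨uB, huB, huB'⟩, vB, hvB, hvB'⟩
    hlt heq
  have ha₂ := second_mem hA2
  have hb₂ := second_mem hB2
  obtain ⟨a₁, ha₁, ha₁₂⟩ := exists_lt_second hA2
  obtain ⟨b₁, hb₁, hb₁₂⟩ := exists_lt_second hB2
  have hb₁a₂ := h.lt_of_lt_of_block_eq hB (mem_of_mem_slice hb₁) (mem_of_mem_slice hb₂) hb₁₂ heq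
  rcases lt_trichotomy a₁ b₁ with hab | rfl | hab
  · exact h.not_ababa B hB A hA hAB.symm ⟨uB, huB, a₁, mem_of_mem_slice ha₁, b₁,
      mem_of_mem_slice hb₁, _, mem_of_mem_slice ha₂, vB, hvB,
      lt_of_mem_slice_of_lt h.monotone huB' ha₁, hab, hb₁a₂,
      lt_of_mem_slice_of_gt h.monotone hvB' ha₂⟩
  · exact h.notMem_of_mem hA hB hAB (mem_of_mem_slice ha₁) (mem_of_mem_slice hb₁)
  · exact h.not_ababa A hA B hB hAB ⟨uA, huA, b₁, mem_of_mem_slice hb₁, a₁,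
      mem_of_mem_slice ha₁, _, mem_of_mem_slice hb₂, vA, hvA,
      lt_of_mem_slice_of_lt h.monotone huA' hb₁, hab, ha₁₂.trans hlt,
      lt_of_mem_slice_of_gt h.monotone hvA' hb₂⟩

open scoped Classical in
theorem card_filter_three_after_le (h : BlockFamily μ m F β) :
    #{A ∈ F | ∃ j, 3 ≤ #(slice β t A j) ∧ MeetsAfter β t A j} ≤ m := by
  refine h.card_filter_exists_le (t := t) (fun A j hQ => by omega) ?_
  rintro A hA B hB hAB j ⟨hA3, -⟩ ⟨hB3, vB, hvB, hvB'⟩ hlt heq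
  have ha₂ := second_mem (s := slice β t A j) (by omega)
  have hb₂ := second_mem (s := slice β t B j) (by omega)
  obtain ⟨b₁, hb₁, hb₁₂⟩ := exists_lt_second (s := slice β t B j) (by omega)
  obtain ⟨a₃, ha₃, ha₂₃⟩ := exists_second_lt hA3
  exact h.not_ababa B hB A hA hAB.symm ⟨b₁, mem_of_mem_slice hb₁, _, mem_of_mem_slice ha₂, _,
    mem_of_mem_slice hb₂, a₃, mem_of_mem_slice ha₃, vB, hvB,
    h.lt_of_lt_of_block_eq hB (mem_of_mem_slice hb₁) (mem_of_mem_slice hb₂) hb₁₂ heq, hlt,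
    h.lt_of_block_eq_of_lt hA (mem_of_mem_slice ha₂) (mem_of_mem_slice ha₃) ha₂₃ heq,
    lt_of_mem_slice_of_gt h.monotone hvB' ha₃⟩

open scoped Classical in
theorem card_filter_three_before_le (h : BlockFamily μ m F β) :
    #{A ∈ F | ∃ j, 3 ≤ #(slice β t A j) ∧ MeetsBefore β t A j} ≤ m := by
  refine h.card_filter_exists_le (t := t) (fun A j hQ => by omega) ?_
  rintro A hA B hB hAB j ⟨hA3, uA, huA, huA'⟩ ⟨hB3, -⟩ hlt heq
  have ha₂ := second_mem (s := slice β t A j) (by omega)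
  have hb₂ := second_mem (s := slice β t B j) (by omega)
  obtain ⟨b₁, hb₁, hb₁₂⟩ := exists_lt_second (s := slice β t B j) (by omega)
  obtain ⟨a₃, ha₃, ha₂₃⟩ := exists_second_lt hA3
  exact h.not_ababa A hA B hB hAB ⟨uA, huA, b₁, mem_of_mem_slice hb₁, _, mem_of_mem_slice ha₂,
    _, mem_of_mem_slice hb₂, a₃, mem_of_mem_slice ha₃,
    lt_of_mem_slice_of_lt h.monotone huA' hb₁,
    h.lt_of_lt_of_block_eq hB (mem_of_mem_slice hb₁) (mem_of_mem_slice hb₂) hb₁₂ heq, hlt,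
    h.lt_of_block_eq_of_lt hA (mem_of_mem_slice ha₂) (mem_of_mem_slice ha₃) ha₂₃ heq⟩

end BlockFamily

def middle (A : Finset ℕ) : Finset ℕ := {x ∈ A | (∃ y ∈ A, y < x) ∧ ∃ y ∈ A, x < y}

theorem card_le_card_middle_add_two (A : Finset ℕ) : #A ≤ #(middle A) + 2 := by
  rcases A.eq_empty_or_nonempty with rfl | hA
  · simp
  have hsub : ((A.erase (A.min' hA)).erase (A.max' hA)) ⊆ middle A := by
    intro x hx
    obtain ⟨hmax, hmin, hxA⟩ : x ≠ A.max' hA ∧ x ≠ A.min' hA ∧ x ∈ A := by simpa using hx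
    exact mem_filter.2 ⟨hxA, ⟨_, A.min'_mem hA, (A.min'_le x hxA).lt_of_ne (Ne.symm hmin)⟩,
      ⟨_, A.max'_mem hA, (A.le_max' x hxA).lt_of_ne hmax⟩⟩
  have h₁ := card_le_card hsub
  have h₂ := pred_card_le_card_erase (s := A.erase (A.min' hA)) (a := A.max' hA)
  have h₃ := pred_card_le_card_erase (s := A) (a := A.min' hA)
  omega

theorem injOn_middle {β : ℕ → ℕ} (hβ : Monotone β) {t : ℕ} {A : Finset ℕ}
    (hloc : ∀ j, ∃ z ∈ A, β z / t ≠ j)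
    (hb : ∀ j, ¬ (2 ≤ #(slice β t A j) ∧ MeetsBefore β t A j ∧ MeetsAfter β t A j))
    (hc : ∀ j, ¬ (3 ≤ #(slice β t A j) ∧ MeetsAfter β t A j))
    (hd : ∀ j, ¬ (3 ≤ #(slice β t A j) ∧ MeetsBefore β t A j)) :
    Set.InjOn (β · / t) (middle A) := by
  intro x hx y hy hxy
  by_contra hne
  wlog hlt : x < y generalizing x y
  · exact this hy hx hxy.symm (Ne.symm hne) (by omega)
  obtain ⟨hxA, ⟨u, huA, hux⟩, -⟩ := mem_filter.1 (mem_coe.1 hx)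
  obtain ⟨hyA, -, ⟨v, hvA, hyv⟩⟩ := mem_filter.1 (mem_coe.1 hy)
  set j := β x / t
  have hxs : x ∈ slice β t A j := mem_filter.2 ⟨hxA, rfl⟩
  have hys : y ∈ slice β t A j := mem_filter.2 ⟨hyA, hxy.symm⟩
  by_cases h3 : 3 ≤ #(slice β t A j)
  · obtain ⟨z, hzA, hzj⟩ := hloc j
    rcases lt_or_gt_of_ne hzj with hz | hz
    · exact hd j ⟨h3, z, hzA, hz⟩
    · exact hc j ⟨h3, z, hzA, hz⟩
  have hu : β u / t < j := by
    refine ((hβ.nat_div t) hux.le).lt_of_ne fun hu => h3 ?_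
    exact two_lt_card_iff.2 ⟨u, x, y, mem_filter.2 ⟨huA, hu⟩, hxs, hys, hux.ne,
      (hux.trans hlt).ne, hlt.ne⟩
  have hv : j < β v / t := by
    refine (hxy ▸ (hβ.nat_div t) hyv.le).lt_of_ne fun hv => h3 ?_
    exact two_lt_card_iff.2 ⟨x, y, v, hxs, hys, mem_filter.2 ⟨hvA, hv.symm⟩, hlt.ne,
      (hlt.trans hyv).ne, hyv.ne⟩
  exact hb j ⟨one_lt_card.2 ⟨x, hxs, y, hys, hne⟩, ⟨u, huA, hu⟩, v, hvA, hv⟩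

open scoped Classical in
def contraction (β : ℕ → ℕ) (t : ℕ) (A : Finset ℕ) : Finset ℕ :=
  {x ∈ middle A | ∀ y ∈ middle A, β y / t = β x / t → x ≤ y}

theorem contraction_subset (β : ℕ → ℕ) (t : ℕ) (A : Finset ℕ) : contraction β t A ⊆ A :=
  (filter_subset _ _).trans (filter_subset _ _)

theorem injOn_contraction (β : ℕ → ℕ) (t : ℕ) (A : Finset ℕ) :
    Set.InjOn (β · / t) (contraction β t A) := fun x hx y hy h => by
  obtain ⟨hx, hx'⟩ := mem_filter.1 (mem_coe.1 hx)
  obtain ⟨hy, hy'⟩ := mem_filter.1 (mem_coe.1 hy)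
  exact le_antisymm (hx' y hy h.symm) (hy' x hx h)

theorem image_contraction (β : ℕ → ℕ) (t : ℕ) (A : Finset ℕ) :
    (contraction β t A).image (β · / t) = (middle A).image (β · / t) := by
  refine (image_subset_image (filter_subset _ _)).antisymm fun j hj => ?_
  obtain ⟨z, hz, rfl⟩ := mem_image.1 hj
  set fib := {x ∈ middle A | β x / t = β z / t}
  have hfib : fib.Nonempty := ⟨z, mem_filter.2 ⟨hz, rfl⟩⟩
  obtain ⟨hmin, hminj⟩ := mem_filter.1 (fib.min'_mem hfib)
  refine mem_image.2 ⟨_, mem_filter.2 ⟨hmin, fun y hy hyj => ?_⟩, hminj⟩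
  exact fib.min'_le y (mem_filter.2 ⟨hy, hyj.trans hminj⟩)

theorem card_contraction (β : ℕ → ℕ) (t : ℕ) (A : Finset ℕ) :
    #(contraction β t A) = #((middle A).image (β · / t)) := by
  rw [← image_contraction, card_image_of_injOn (injOn_contraction β t A)]

namespace BlockFamily

variable {μ m t : ℕ} {F : Finset (Finset ℕ)} {β : ℕ → ℕ}

open scoped Classical in
theorem restrict_run (h : BlockFamily μ m F β) (ht : 0 < t) (j : ℕ) :
    BlockFamily μ t {A ∈ F | ∀ x ∈ A, β x / t = j} (β · - j * t) := by
  have hrun : ∀ A ∈ {A ∈ F | ∀ x ∈ A, β x / t = j}, ∀ x ∈ A, j * t ≤ β x ∧ β x < j * t + t :=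
    fun A hA x hx => by
      have := (mem_filter.1 hA).2 x hx
      constructor
      · exact this ▸ Nat.div_mul_le_self (β x) t
      · have := Nat.lt_div_mul_add (a := β x) ht; rwa [‹β x / t = j›] at this
  refine ⟨fun A hA => h.le_card A (mem_filter.1 hA).1, fun A hA x hx => ?_,
    fun x y hxy => Nat.sub_le_sub_right (h.monotone hxy) _, fun A hA x hx y hy hxy => ?_,
    h.pairwiseDisjoint.subset (coe_subset.2 (filter_subset _ _)),
    fun A hA B hB => h.not_ababa A (mem_filter.1 hA).1 B (mem_filter.1 hB).1⟩
  · have := hrun A hA x hx; omega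
  · have := hrun A hA x hx; have := hrun A hA y hy
    exact h.injOn A (mem_filter.1 hA).1 hx hy (by omega)

open scoped Classical in
theorem card_filter_local_le {p L : ℕ} (h : BlockFamily μ m F β) (hμ : 0 < μ) (ht : 0 < t)
    (hpt : m ≤ p * t) (hL : FamilyBound μ t L) :
    #{A ∈ F | ∃ j, ∀ x ∈ A, β x / t = j} ≤ p * L := by
  calc #{A ∈ F | ∃ j, ∀ x ∈ A, β x / t = j}
      ≤ #((range p).biUnion fun j => {A ∈ F | ∀ x ∈ A, β x / t = j}) := card_le_card ?_
    _ ≤ ∑ j ∈ range p, #{A ∈ F | ∀ x ∈ A, β x / t = j} := card_biUnion_le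
    _ ≤ ∑ _j ∈ range p, L := sum_le_sum fun j _ => hL _ _ (h.restrict_run ht j)
    _ = p * L := by rw [sum_const, card_range, smul_eq_mul]
  intro A hA
  obtain ⟨hAF, j, hj⟩ := mem_filter.1 hA
  obtain ⟨x, hx⟩ := h.nonempty hμ hAF
  refine mem_biUnion.2 ⟨j, mem_range.2 ?_, mem_filter.2 ⟨hAF, hj⟩⟩
  rw [← hj x hx]
  exact Nat.div_lt_of_lt_mul ((h.lt_of_mem A hAF x hx).trans_le (by rwa [mul_comm]))

open scoped Classical in
theorem contract {p : ℕ} (h : BlockFamily μ m F β) (hpt : m ≤ p * t) :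
    BlockFamily (μ - 2) p
      ({A ∈ F | μ - 2 ≤ #((middle A).image (β · / t))}.image (contraction β t)) (β · / t) := by
  refine ⟨?_, ?_, h.monotone.nat_div t, ?_, ?_, ?_⟩
  · simp only [mem_image, mem_filter]
    rintro _ ⟨A, ⟨-, hA⟩, rfl⟩
    rwa [card_contraction]
  · simp only [mem_image, mem_filter]
    rintro _ ⟨A, ⟨hAF, -⟩, rfl⟩ x hx
    exact Nat.div_lt_of_lt_mul ((h.lt_of_mem A hAF x (contraction_subset β t A hx)).trans_le
      (by rwa [mul_comm]))
  · simp only [mem_image]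
    rintro _ ⟨A, -, rfl⟩
    exact injOn_contraction β t A
  · intro A' hA' B' hB' hAB'
    obtain ⟨A, hA, rfl⟩ := mem_image.1 (mem_coe.1 hA')
    obtain ⟨B, hB, rfl⟩ := mem_image.1 (mem_coe.1 hB')
    exact (h.pairwiseDisjoint (mem_filter.1 hA).1 (mem_filter.1 hB).1
      fun e => hAB' (e ▸ rfl)).mono (contraction_subset β t A) (contraction_subset β t B)
  · simp only [mem_image]
    rintro _ ⟨A, hA, rfl⟩ _ ⟨B, hB, rfl⟩ hAB
    exact fun hab => h.not_ababa A (mem_filter.1 hA).1 B (mem_filter.1 hB).1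
      (fun e => hAB (e ▸ rfl)) (hab.mono (contraction_subset β t A) (contraction_subset β t B))

open scoped Classical in
theorem card_image_contraction (h : BlockFamily μ m F β) (hμ : 3 ≤ μ) :
    #({A ∈ F | μ - 2 ≤ #((middle A).image (β · / t))}.image (contraction β t)) =
      #{A ∈ F | μ - 2 ≤ #((middle A).image (β · / t))} := by
  refine card_image_of_injOn fun A hA B hB hAB => by_contra fun hne => ?_
  obtain ⟨hAF, hA⟩ := mem_filter.1 (mem_coe.1 hA)
  obtain ⟨hBF, -⟩ := mem_filter.1 (mem_coe.1 hB)
  obtain ⟨x, hx⟩ := card_pos.1 (show 0 < #(contraction β t A) by rw [card_contraction]; omega)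
  exact h.notMem_of_mem hAF hBF hne (contraction_subset β t A hx)
    (contraction_subset β t B (hAB ▸ hx))

end BlockFamily

theorem FamilyBound.of_split {μ m t p L L' : ℕ} (hμ : 3 ≤ μ) (ht : 0 < t) (hpt : m ≤ p * t)
    (hL : FamilyBound μ t L) (hL' : FamilyBound (μ - 2) p L') :
    FamilyBound μ m (p * L + L' + 3 * m) := by
  classical
  intro F β h
  set F₁ := {A ∈ F | ∃ j, ∀ x ∈ A, β x / t = j}
  set F₂ := {A ∈ F | ∃ j, 2 ≤ #(slice β t A j) ∧ MeetsBefore β t A j ∧ MeetsAfter β t A j}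
  set F₃ := {A ∈ F | ∃ j, 3 ≤ #(slice β t A j) ∧ MeetsAfter β t A j}
  set F₄ := {A ∈ F | ∃ j, 3 ≤ #(slice β t A j) ∧ MeetsBefore β t A j}
  set F₅ := {A ∈ F | μ - 2 ≤ #((middle A).image (β · / t))}
  have hcover : F ⊆ F₁ ∪ F₂ ∪ F₃ ∪ F₄ ∪ F₅ := by
    intro A hA
    simp only [F₁, F₂, F₃, F₄, F₅, mem_union, mem_filter, hA, true_and]
    by_contra hno
    simp only [not_or, not_exists, not_forall] at hno
    obtain ⟨⟨⟨⟨hloc, hb⟩, hc⟩, hd⟩, ha⟩ := hno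
    refine ha ?_
    have := card_le_card_middle_add_two A
    have := h.le_card A hA
    rw [card_image_of_injOn (injOn_middle h.monotone (fun j => by simpa using hloc j) hb hc hd)]
    omega
  have h₁ : #F₁ ≤ p * L := h.card_filter_local_le (by omega) ht hpt hL
  have h₅ : #F₅ ≤ L' := h.card_image_contraction hμ ▸ hL' _ _ (h.contract hpt)
  have := card_le_card hcover
  have := card_union_le (F₁ ∪ F₂ ∪ F₃ ∪ F₄) F₅
  have := card_union_le (F₁ ∪ F₂ ∪ F₃) F₄
  have := card_union_le (F₁ ∪ F₂) F₃
  have := card_union_le F₁ F₂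
  have : #F₂ ≤ m := h.card_filter_straddling_le
  have : #F₃ ≤ m := h.card_filter_three_after_le
  have : #F₄ ≤ m := h.card_filter_three_before_le
  omega

/-! ### The bound by induction on `k` -/

theorem invAk_two_le_half_add_one (m : ℕ) : invAk 2 m ≤ m / 2 + 1 :=
  invAk_two_le_iff.2 (by have := Nat.lt_two_pow_self (n := m / 2); rw [pow_succ]; omega)

/-- Two runs of `⌈m/2⌉` blocks: a contracted set has `3` positions in distinct blocks out of `2`,
so there is none and `F(m) ≤ 2 F(⌈m/2⌉) + 3m`. -/
theorem familyBound_five (m : ℕ) : FamilyBound 5 m (8 * m * invAk 2 m) := by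
  induction m using Nat.strong_induction_on with
  | _ m ih =>
    rcases Nat.lt_or_ge m 5 with hm | hm
    · exact fun F β h => (h.eq_empty_of_lt hm) ▸ Nat.zero_le _
    have hsplit := FamilyBound.of_split (m := m) (t := (m + 1) / 2) (p := 2) (by norm_num)
      (by omega) (by omega) (ih _ (by omega)) (familyBound_zero_of_lt (by norm_num))
    refine fun F β h => (hsplit F β h).trans ?_
    obtain ⟨b, hb⟩ : ∃ b, invAk 2 m = b + 1 :=
      ⟨invAk 2 m - 1, by have := mt (@invAk_two_le_iff m 2).1 (by norm_num; omega); omega⟩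
    have hm2 := invAk_two_le_iff.1 (le_refl (invAk 2 m))
    rw [hb, pow_succ] at hm2
    have hta : invAk 2 ((m + 1) / 2) ≤ b := invAk_two_le_iff.2 (by omega)
    have hbm : 2 * b ≤ m := by have := invAk_two_le_half_add_one m; omega
    have : 2 * ((m + 1) / 2) * invAk 2 ((m + 1) / 2) ≤ (m + 1) * b :=
      Nat.mul_le_mul (Nat.mul_div_le (m + 1) 2) hta
    rw [hb]
    nlinarith

theorem exists_le_mul_lt_add (m : ℕ) {t : ℕ} (ht : 0 < t) : ∃ p, m ≤ p * t ∧ p * t < m + t :=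
  ⟨(m + t - 1) / t, by have := Nat.lt_div_mul_add (a := m + t - 1) ht; omega,
    by have := Nat.div_mul_le_self (m + t - 1) t; omega⟩

theorem familyBound_of_le_two_pow_sixteen {μ m : ℕ} (hμ : 5 ≤ μ) (hm : m ≤ 2 ^ 16) :
    FamilyBound μ m (128 * m) := by
  refine fun F β h => (familyBound_five m F β (h.mono_left hμ)).trans ?_
  have : invAk 2 m ≤ 16 := invAk_two_le_iff.2 hm
  nlinarith

theorem familyBound_of_invAk_le {j m : ℕ} (hj : 2 ≤ j)
    (hprev : ∀ n, FamilyBound (2 * j + 1) n (128 * (n * (2 * invAk j n + 8))))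
    (hm : 2 ^ 16 ≤ m) (hw : invAk j m ≤ 1024) :
    FamilyBound (2 * j + 3) m (128 * (m * 4)) := by
  obtain ⟨p, hpt, hpt'⟩ := exists_le_mul_lt_add m (t := 2 ^ 16) (by norm_num)
  have hsplit := FamilyBound.of_split (μ := 2 * j + 3) (by omega) (by norm_num) hpt
    (familyBound_of_le_two_pow_sixteen (by omega) le_rfl) (hprev p)
  have : invAk j p ≤ 1024 := (invAk_mono j (show p ≤ m by omega)).trans hw
  have : p * (2 * invAk j p + 8) ≤ p * 2056 := Nat.mul_le_mul_left p (by omega)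
  norm_num at hpt' hm
  exact hsplit.mono_right (by linarith)

theorem cascade_run_bounds {j m : ℕ} (hj : 2 ≤ j) (hw : 1025 ≤ invAk j m) :
    256 * invAk j m ≤ Ak j (invAk j (invAk j m) + 8) ∧
      4 * (Ak j (invAk j (invAk j m) + 8) * (invAk j m + 3)) ≤ m := by
  obtain ⟨i, rfl⟩ := Nat.exists_eq_add_of_le' hj
  set w := invAk (i + 2) m
  set t := Ak (i + 2) (invAk (i + 2) w + 8)
  have hs := invAk_add_eight_le_half hj hw
  constructor
  · calc 256 * w ≤ 2 ^ 8 * Ak (i + 2) (invAk (i + 2) w) :=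
          Nat.mul_le_mul_left _ (le_Ak_invAk _ _)
      _ ≤ t := two_pow_mul_le_Ak_add _ _ _
  · have hgap : 2 ^ (w - 1 - (invAk (i + 2) w + 8)) * t ≤ Ak (i + 2) (w - 1) := by
      have := two_pow_mul_le_Ak_add i (invAk (i + 2) w + 8) (w - 1 - (invAk (i + 2) w + 8))
      rwa [Nat.add_sub_cancel' (by omega)] at this
    have hlt : Ak (i + 2) (w - 1) < m := Ak_lt_of_lt_invAk (by omega)
    have hpow : 4 * (w + 3) ≤ 2 ^ (w - 1 - (invAk (i + 2) w + 8)) := by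
      have := four_mul_add_four_le_two_pow (d := w / 4) (by omega)
      calc 4 * (w + 3) ≤ 2 ^ (w / 4 + 3) := by rw [pow_add]; omega
        _ ≤ _ := Nat.pow_le_pow_right (by norm_num) (by omega)
    calc 4 * (t * (w + 3)) = 4 * (w + 3) * t := by ring
      _ ≤ 2 ^ (w - 1 - (invAk (i + 2) w + 8)) * t := Nat.mul_le_mul_right t hpow
      _ ≤ m := hgap.trans hlt.le

/-- Runs of `t = A_j(α_j(w) + 8)` blocks, `w = α_j(m)`: as `256 w ≤ t` the contracted family,
bounded through level `j`, costs `O(m)`, and the runs themselves sit one step lower in the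
cascade, since `α_j(t) ≤ α_j(w) + 8`. -/
theorem familyBound_cascade {j m : ℕ} (hj : 2 ≤ j)
    (hprev : ∀ n, FamilyBound (2 * j + 1) n (128 * (n * (2 * invAk j n + 8))))
    (hw : 1025 ≤ invAk j m)
    (ih : ∀ n < m, FamilyBound (2 * j + 3) n (128 * (n * (cascadeDepth j (invAk j n) + 4)))) :
    FamilyBound (2 * j + 3) m (128 * (m * (cascadeDepth j (invAk j m) + 4))) := by
  obtain ⟨h256, hft⟩ := cascade_run_bounds hj hw
  set w := invAk j m
  set s := invAk j w + 8
  set t := Ak j s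
  have ht : 0 < t := by omega
  have htm : t < m := by nlinarith
  obtain ⟨p, hpt, hpt'⟩ := exists_le_mul_lt_add m ht
  have hsplit := FamilyBound.of_split (μ := 2 * j + 3) (by omega) ht hpt (ih t htm) (hprev p)
  refine fun F β h => (hsplit F β h).trans ?_
  have hD : cascadeDepth j w = cascadeDepth j s + 1 := cascadeDepth_of_lt hj (by omega)
  have hDt : cascadeDepth j (invAk j t) ≤ cascadeDepth j s :=
    cascadeDepth_mono hj (invAk_Ak_le j s)
  have hDw : cascadeDepth j w ≤ w := cascadeDepth_le_self j w
  have hp : invAk j p ≤ w := invAk_mono j (show p ≤ m by nlinarith)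
  rw [hD]
  have e₁ : p * (t * (cascadeDepth j (invAk j t) + 4)) ≤ (m + t) * (cascadeDepth j s + 4) := by
    rw [← mul_assoc]; exact Nat.mul_le_mul hpt'.le (by omega)
  have e₂ : t * (cascadeDepth j s + 4) ≤ t * (w + 3) := Nat.mul_le_mul_left _ (by omega)
  have e₃ : p * (2 * invAk j p + 8) ≤ p * (3 * w) := Nat.mul_le_mul_left _ (by omega)
  have e₄ : p * (256 * w) ≤ p * t := Nat.mul_le_mul_left _ h256
  nlinarith

theorem familyBound_cascadeDepth {j : ℕ} (hj : 2 ≤ j)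
    (hprev : ∀ n, FamilyBound (2 * j + 1) n (128 * (n * (2 * invAk j n + 8)))) (m : ℕ) :
    FamilyBound (2 * j + 3) m (128 * (m * (cascadeDepth j (invAk j m) + 4))) := by
  induction m using Nat.strong_induction_on with
  | _ m ih =>
    by_cases hm : m ≤ 2 ^ 16
    · exact (familyBound_of_le_two_pow_sixteen (by omega) hm).mono_right (by nlinarith)
    by_cases hw : invAk j m ≤ 1024
    · exact (familyBound_of_invAk_le hj hprev (by omega) hw).mono_right (by nlinarith)
    exact familyBound_cascade hj hprev (by omega) ih

theorem familyBound_ackermann {k : ℕ} (hk : 2 ≤ k) (m : ℕ) :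
    FamilyBound (2 * k + 1) m (128 * (m * (2 * invAk k m + 8))) := by
  induction k, hk using Nat.le_induction generalizing m with
  | base => exact (familyBound_five m).mono_right (by nlinarith)
  | succ j hj hprev =>
    refine (familyBound_cascadeDepth hj hprev m).mono_right ?_
    have := cascadeDepth_le hj (invAk j m)
    have := invAk_mono (j + 1) (invAk_le_self j m)
    exact Nat.mul_le_mul_left _ (Nat.mul_le_mul_left _ (by omega))

/-! ### From sequences to families -/

def blockIndex : List (List ℕ) → ℕ → ℕ
  | [], _ => 0
  | B :: Bs, i => if i < B.length then 0 else blockIndex Bs (i - B.length) + 1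

theorem blockIndex_mono : ∀ Bs : List (List ℕ), Monotone (blockIndex Bs)
  | [] => fun _ _ _ => le_rfl
  | B :: Bs => fun i j hij => by
    have := blockIndex_mono Bs (Nat.sub_le_sub_right hij B.length)
    simp only [blockIndex]
    split_ifs <;> omega

theorem blockIndex_lt_length : ∀ {Bs : List (List ℕ)} {i : ℕ}, i < Bs.flatten.length →
    blockIndex Bs i < Bs.length
  | [], _, h => by simp at h
  | B :: Bs, i, h => by
    simp only [List.flatten_cons, List.length_append] at h
    simp only [blockIndex, List.length_cons]
    split_ifs with hi
    · omega
    · have := blockIndex_lt_length (Bs := Bs) (i := i - B.length) (by omega)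
      omega

theorem eq_of_blockIndex_eq : ∀ {Bs : List (List ℕ)}, (∀ B ∈ Bs, B.Nodup) → ∀ {i i' a : ℕ},
    Bs.flatten[i]? = some a → Bs.flatten[i']? = some a → blockIndex Bs i = blockIndex Bs i' →
    i = i'
  | [], _, _, _, _, h, _, _ => by simp at h
  | B :: Bs, hBs, i, i', a, hi, hi', h => by
    simp only [List.flatten_cons, List.getElem?_append] at hi hi'
    simp only [blockIndex] at h
    split_ifs at hi hi' h with h₁ h₂ h₂
    · exact (List.getElem?_inj h₁ (hBs B List.mem_cons_self)).1 (hi.trans hi'.symm)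
    · have := eq_of_blockIndex_eq (fun B hB => hBs B (List.mem_cons_of_mem _ hB)) hi hi'
        (by omega)
      omega

def positions (S : List ℕ) (a : ℕ) : Finset ℕ := {i ∈ range S.length | S[i]? = some a}

theorem mem_positions {S : List ℕ} {a i : ℕ} : i ∈ positions S a ↔ S[i]? = some a := by
  simp only [positions, mem_filter, mem_range, and_iff_right_iff_imp]
  intro h
  exact (List.getElem?_eq_some_iff.1 h).1

theorem card_positions (S : List ℕ) (a : ℕ) : #(positions S a) = S.count a := by
  induction S with
  | nil => rfl
  | cons x S ih =>
    rw [positions] at ih ⊢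
    rw [card_filter, List.length_cons, sum_range_succ']
    simp only [List.getElem?_cons_succ, List.getElem?_cons_zero, ← card_filter, ih,
      List.count_cons, Option.some.injEq, beq_iff_eq]

theorem card_image_positions (S : List ℕ) : #(S.toFinset.image (positions S)) = #S.toFinset := by
  refine card_image_of_injOn fun a ha b _ hab => ?_
  obtain ⟨i, hi, rfl⟩ := List.getElem_of_mem (List.mem_toFinset.1 ha)
  have : i ∈ positions S b := (congrArg (i ∈ ·) hab).mp (mem_positions.2 (by simp))
  rw [mem_positions, List.getElem?_eq_getElem hi] at this
  exact Option.some.inj this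

theorem hasAlt_of_ababa {S : List ℕ} {a b : ℕ} (hab : a ≠ b)
    (h : Ababa (positions S a) (positions S b)) : HasAlt S 5 := by
  obtain ⟨x₁, h₁, y₁, h₂, x₂, h₃, y₂, h₄, x₃, h₅, hlt₁, hlt₂, hlt₃, hlt₄⟩ := h
  obtain ⟨hx₁, rfl⟩ := List.getElem?_eq_some_iff.1 (mem_positions.1 h₁)
  obtain ⟨hy₁, rfl⟩ := List.getElem?_eq_some_iff.1 (mem_positions.1 h₂)
  obtain ⟨hx₂, e₃⟩ := List.getElem?_eq_some_iff.1 (mem_positions.1 h₃)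
  obtain ⟨hy₂, e₄⟩ := List.getElem?_eq_some_iff.1 (mem_positions.1 h₄)
  obtain ⟨hx₃, e₅⟩ := List.getElem?_eq_some_iff.1 (mem_positions.1 h₅)
  refine ⟨_, _, hab, ?_⟩
  have := List.map_getElem_sublist (l := S)
    (is := [⟨x₁, hx₁⟩, ⟨y₁, hy₁⟩, ⟨x₂, hx₂⟩, ⟨y₂, hy₂⟩, ⟨x₃, hx₃⟩])
    (by simp only [List.pairwise_cons, List.mem_cons, List.not_mem_nil, or_false,
          forall_eq_or_imp, forall_eq, Fin.mk_lt_mk, IsEmpty.forall_iff, implies_true,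
          List.Pairwise.nil, and_true]
        omega)
  simpa [altList, e₃, e₄, e₅] using this

theorem blockFamily_positions {μ m : ℕ} {Bs : List (List ℕ)} (hBs : ∀ B ∈ Bs, B.Nodup)
    (hm : Bs.length ≤ m) (hcount : ∀ a ∈ Bs.flatten, μ ≤ Bs.flatten.count a)
    (halt : ¬ HasAlt Bs.flatten 5) :
    BlockFamily μ m (Bs.flatten.toFinset.image (positions Bs.flatten)) (blockIndex Bs) := by
  refine ⟨?_, ?_, blockIndex_mono Bs, ?_, ?_, ?_⟩ <;>
    simp only [coe_image, Set.PairwiseDisjoint, Set.Pairwise, Set.mem_image, mem_coe, mem_image,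
      List.mem_toFinset, forall_exists_index, and_imp, forall_apply_eq_imp_iff₂]
  · exact fun a ha => card_positions _ a ▸ hcount a ha
  · exact fun a _ i hi =>
      (blockIndex_lt_length (List.getElem?_eq_some_iff.1 (mem_positions.1 hi)).1).trans_le hm
  · exact fun a _ i hi i' hi' h =>
      eq_of_blockIndex_eq hBs (mem_positions.1 hi) (mem_positions.1 hi') h
  · refine fun a _ b _ hab => disjoint_left.2 fun i hia hib => hab ?_
    rw [Option.some.inj ((mem_positions.1 hia).symm.trans (mem_positions.1 hib))]
  · exact fun a _ b _ hab h => halt (hasAlt_of_ababa (fun e => hab (congrArg _ e)) h)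

theorem IsADS.card_toFinset_le {k m : ℕ} {S : List ℕ} (hk : 2 ≤ k) (hS : IsADS 3 (2 * k + 1) m S) :
    #S.toFinset ≤ 768 * m * invAk k m := by
  obtain ⟨⟨Bs, hlen, rfl, hBs⟩, hcount, halt⟩ := hS
  have hF := blockFamily_positions hBs hlen hcount halt
  rw [← card_image_positions]
  by_cases hα : invAk k m ≤ 1
  · obtain ⟨i, rfl⟩ := Nat.exists_eq_add_of_le' hk
    have := invAk_le_iff.1 hα
    rw [Ak_succ_one] at this
    rw [hF.eq_empty_of_lt (by omega), card_empty]
    exact Nat.zero_le _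
  · exact (familyBound_ackermann hk m _ _ hF).trans (by nlinarith)

/-- There is an absolute constant `c` such that `N^3_{2k+1}(m) ≤ c·m·α_k(m)` for every
`k ≥ 2` and `m ≥ 1`. -/
theorem NADS3_upper :
    ∃ c : ℕ, ∀ k m : ℕ, 2 ≤ k → 1 ≤ m →
      NADS 3 (2 * k + 1) m ≤ ((c * m * invAk k m : ℕ) : ℕ∞) := by
  refine ⟨768, fun k m hk _ => sSup_le ?_⟩
  rintro _ ⟨S, hS, rfl⟩
  exact Nat.cast_le.2 (hS.card_toFinset_le hk)
end
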